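/- arXiv:1711.02337 — 3 statements merged into one kernel-verified Lean document; each statement's English description precedes it below -/
import Mathlib

section
/- For every nonnegative integer n, the generating function Σ_{π∈RPP(δ_{n+2}/δ_n)} q^{|π|} equals E*_{2n+1}(q)/(q;q)_{2n+1} as a formal power series in q. -/
open Finset

attribute [local instance 10] Classical.propDecidable

noncomputable section

namespace Paper

/-! ### Words and permutation statistics (all words are 1-based). -/

/-- The word (one-line notation, 1-based) of a permutation of `{1, …, N}`:
`word π i = π(i)` for `1 ≤ i ≤ N`, and `0` otherwise. -/
def word {N : ℕ} (π : Equiv.Perm (Fin N)) (i : ℕ) : ℕ :=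
  if h : 1 ≤ i ∧ i ≤ N then (π ⟨i - 1, by omega⟩ : ℕ) + 1 else 0

/-- The major index of a word of length `N`: the sum of the descents. -/
def majW (N : ℕ) (w : ℕ → ℕ) : ℕ :=
  ∑ i ∈ Finset.Icc 1 (N - 1), if w (i + 1) < w i then i else 0

/-- The number of inversions of a word of length `N`. -/
def invW (N : ℕ) (w : ℕ → ℕ) : ℕ :=
  (((Finset.Icc 1 N) ×ˢ (Finset.Icc 1 N)).filter
    fun p => p.1 < p.2 ∧ w p.2 < w p.1).card

/-- The number of descents of a word of length `m`. -/
def desW (m : ℕ) (w : ℕ → ℕ) : ℕ :=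
  ((Finset.Icc 1 (m - 1)).filter fun i => w (i + 1) < w i).card

/-- The number of ascents of a word of length `m`. -/
def ascW (m : ℕ) (w : ℕ → ℕ) : ℕ :=
  ((Finset.Icc 1 (m - 1)).filter fun i => w i < w (i + 1)).card

/-- The number of non-descents of a word of length `m`. -/
def ndesW (m : ℕ) (w : ℕ → ℕ) : ℕ :=
  ((Finset.Icc 1 m).filter fun i => i = m ∨ w i < w (i + 1)).card

/-- The number of non-ascents of a word of length `m`. -/
def nascW (m : ℕ) (w : ℕ → ℕ) : ℕ :=
  ((Finset.Icc 1 m).filter fun i => i = m ∨ ¬ w i < w (i + 1)).card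

/-- `π_e = π₂π₄⋯`, the subword of even-position entries, as a 1-based word. -/
def evenWord {N : ℕ} (π : Equiv.Perm (Fin N)) (j : ℕ) : ℕ := word π (2 * j)

/-- `π_o = π₁π₃⋯`, the subword of odd-position entries, as a 1-based word. -/
def oddWord {N : ℕ} (π : Equiv.Perm (Fin N)) (j : ℕ) : ℕ := word π (2 * j - 1)

/-- A word of length `N` is alternating: `w₁ < w₂ > w₃ < w₄ > ⋯`. -/
def IsAltW (N : ℕ) (w : ℕ → ℕ) : Prop :=
  ∀ i ∈ Finset.Icc 1 (N - 1), (i % 2 = 1 → w i < w (i + 1)) ∧ (i % 2 = 0 → w (i + 1) < w i)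

/-- A word of length `N` is reverse alternating: `w₁ > w₂ < w₃ > w₄ < ⋯`. -/
def IsRaltW (N : ℕ) (w : ℕ → ℕ) : Prop :=
  ∀ i ∈ Finset.Icc 1 (N - 1), (i % 2 = 1 → w (i + 1) < w i) ∧ (i % 2 = 0 → w i < w (i + 1))

/-- `Alt_N`, the set of alternating permutations of `{1, …, N}`. -/
def altPerms (N : ℕ) : Finset (Equiv.Perm (Fin N)) :=
  Finset.univ.filter fun π => IsAltW N (word π)

/-- `Ralt_N`, the set of reverse alternating permutations of `{1, …, N}`. -/
def raltPerms (N : ℕ) : Finset (Equiv.Perm (Fin N)) :=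
  Finset.univ.filter fun π => IsRaltW N (word π)

/-- `κ_N = (1)(2,3)(4,5)⋯`, acting on the 1-based values `{1, …, N}`. -/
def kappaNat (N j : ℕ) : ℕ :=
  if j % 2 = 0 ∧ 2 ≤ j ∧ j + 1 ≤ N then j + 1
  else if j % 2 = 1 ∧ 3 ≤ j ∧ j ≤ N then j - 1
  else j

/-- `η_N = (1,2)(3,4)⋯`, acting on the 1-based values `{1, …, N}`. -/
def etaNat (N j : ℕ) : ℕ :=
  if j % 2 = 1 ∧ j + 1 ≤ N then j + 1
  else if j % 2 = 0 ∧ 2 ≤ j ∧ j ≤ N then j - 1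
  else j

/-- `maj(π⁻¹)`. -/
def majInv (N : ℕ) (π : Equiv.Perm (Fin N)) : ℕ := majW N (word π.symm)

/-- `maj(κ_N π⁻¹)`. -/
def majKappaInv (N : ℕ) (π : Equiv.Perm (Fin N)) : ℕ :=
  majW N fun i => kappaNat N (word π.symm i)

/-- `maj(η_N π⁻¹)`. -/
def majEtaInv (N : ℕ) (π : Equiv.Perm (Fin N)) : ℕ :=
  majW N fun i => etaNat N (word π.symm i)

/-- The reversal permutation `i ↦ N + 1 - i` of `Fin N`. -/
def revPerm (N : ℕ) : Equiv.Perm (Fin N) :=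
  ⟨Fin.rev, Fin.rev, fun i => Fin.rev_rev i, fun i => Fin.rev_rev i⟩

/-- `φ(π)ᵢ = (N+1) - π_{N+1-i}`. -/
def phiMap {N : ℕ} (π : Equiv.Perm (Fin N)) : Equiv.Perm (Fin N) :=
  ((revPerm N).trans π).trans (revPerm N)

/-! ### Lattice paths.

A path with `L` unit steps is encoded by `s : Fin L → Bool` (`true` = up-step `(1,1)`,
`false` = down-step `(1,-1)`). -/

/-- The vertical displacement of the `j`-th step. -/
def stepVal {L : ℕ} (s : Fin L → Bool) (j : ℕ) : ℤ :=
  if h : j < L then (if s ⟨j, h⟩ then 1 else -1) else 0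

/-- The height of the path after `i` steps. -/
def pht {L : ℕ} (s : Fin L → Bool) (i : ℕ) : ℤ := ∑ j ∈ Finset.range i, stepVal s j

/-- A Dyck path: stays (weakly) above the `x`-axis and ends at height `0`. -/
def IsDyck {L : ℕ} (s : Fin L → Bool) : Prop :=
  (∀ i ∈ Finset.range (L + 1), 0 ≤ pht s i) ∧ pht s L = 0

/-- The Dyck paths with `L` steps. -/
def dyckPaths (L : ℕ) : Finset (Fin L → Bool) := Finset.univ.filter fun s => IsDyck s

/-- The (indices of the) valleys of a path: a down-step followed by an up-step. -/
def valleys {L : ℕ} (s : Fin L → Bool) : Finset ℕ :=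
  (Finset.Icc 1 (L - 1)).filter fun i => stepVal s (i - 1) = -1 ∧ stepVal s i = 1

/-- The (indices of the) peaks of a path: an up-step followed by a down-step. -/
def peaks {L : ℕ} (s : Fin L → Bool) : Finset ℕ :=
  (Finset.Icc 1 (L - 1)).filter fun i => stepVal s (i - 1) = 1 ∧ stepVal s i = -1

/-- The (indices of the) high peaks of a path: peaks of height at least `2`. -/
def highPeaks {L : ℕ} (s : Fin L → Bool) : Finset ℕ :=
  (peaks s).filter fun i => 2 ≤ pht s i

/-- The height over abscissa `x` of a path starting at `(-m, 0)`. -/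
def aht (m : ℕ) {L : ℕ} (s : Fin L → Bool) (x : ℤ) : ℤ := pht s (x + m).toNat

/-- `D₁ < D₂`, for `D₁` starting at `(-m₁,0)` and `D₂` at `(-m₂,0)`, `m₁ ≤ m₂`:
strictly below on the common range of abscissas. -/
def PathLT (m₁ m₂ : ℕ) {L₁ L₂ : ℕ} (s₁ : Fin L₁ → Bool) (s₂ : Fin L₂ → Bool) : Prop :=
  ∀ x ∈ Finset.Icc (-(m₁ : ℤ)) (m₁ : ℤ), aht m₁ s₁ x < aht m₂ s₂ x

/-- `D₁ ≤ D₂`: weakly below, sharing no step. -/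
def PathLE (m₁ m₂ : ℕ) {L₁ L₂ : ℕ} (s₁ : Fin L₁ → Bool) (s₂ : Fin L₂ → Bool) : Prop :=
  (∀ x ∈ Finset.Icc (-(m₁ : ℤ)) (m₁ : ℤ), aht m₁ s₁ x ≤ aht m₂ s₂ x) ∧
    ∀ x ∈ Finset.Icc (-(m₁ : ℤ)) ((m₁ : ℤ) - 1),
      ¬(aht m₁ s₁ x = aht m₂ s₂ x ∧ aht m₁ s₁ (x + 1) = aht m₂ s₂ (x + 1))

/-- The abscissas of the common lattice points of two paths. -/
def interPts (m₁ m₂ : ℕ) {L₁ L₂ : ℕ} (s₁ : Fin L₁ → Bool) (s₂ : Fin L₂ → Bool) : Finset ℤ :=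
  (Finset.Icc (-(m₁ : ℤ)) (m₁ : ℤ)).filter fun x => aht m₁ s₁ x = aht m₂ s₂ x

/-- `Dyck^k_{2n}`: tuples `(D₁, …, D_k)` with `D_i ∈ Dyck((-n-2i+2,0) → (n+2i-2,0))`
(0-based: `D_i` has half-length `n + 2i`). -/
abbrev DyckTuple (n k : ℕ) := ∀ i : Fin k, Fin (2 * (n + 2 * (i : ℕ))) → Bool

/-- The tuples `(D₁ ≤ D₂ ≤ ⋯ ≤ D_k) ∈ Dyck^k_{2n}`. -/
def weakTuples (n k : ℕ) : Finset (DyckTuple n k) :=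
  Finset.univ.filter fun D =>
    (∀ i : Fin k, IsDyck (D i)) ∧
      ∀ (i : ℕ) (h : i + 1 < k),
        PathLE (n + 2 * i) (n + 2 * (i + 1)) (D ⟨i, by omega⟩) (D ⟨i + 1, h⟩)

/-- The tuples `(D₁ < D₂ < ⋯ < D_k) ∈ Dyck^k_{2n}`. -/
def strictTuples (n k : ℕ) : Finset (DyckTuple n k) :=
  Finset.univ.filter fun D =>
    (∀ i : Fin k, IsDyck (D i)) ∧
      ∀ (i : ℕ) (h : i + 1 < k),
        PathLT (n + 2 * i) (n + 2 * (i + 1)) (D ⟨i, by omega⟩) (D ⟨i + 1, h⟩)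

/-- The lattice points of a path starting at `(-m, 0)`, as a finite subset of `ℤ × ℤ`. -/
def pathPoints (m : ℕ) {L : ℕ} (s : Fin L → Bool) : Finset (ℤ × ℤ) :=
  (Finset.range (L + 1)).image fun t : ℕ => (-(m : ℤ) + (t : ℤ), pht s t)

/-- The non-valley lattice points of a path starting at `(-m, 0)`. -/
def nonValleyPoints (m : ℕ) {L : ℕ} (s : Fin L → Bool) : Finset (ℤ × ℤ) :=
  ((Finset.range (L + 1)).filter fun t => t ∉ valleys s).image
    fun t : ℕ => (-(m : ℤ) + (t : ℤ), pht s t)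

section Weights

variable {F : Type*} [Field F]

/-- The `i`-th lattice point (in `ℤ × ℕ`) of a path starting at `(a, 0)`. -/
def ptOf (a : ℤ) {L : ℕ} (s : Fin L → Bool) (i : ℕ) : ℤ × ℕ := (a + i, (pht s i).toNat)

/-- `wt_V(D) = ∏_{p ∈ D} wt(p) · ∏_{p ∈ V(D)} w̃t(p)` for a path starting at `(a, 0)`. -/
def wtVal (wt wte : ℤ × ℕ → F) (a : ℤ) {L : ℕ} (s : Fin L → Bool) : F :=
  (∏ i ∈ Finset.range (L + 1), wt (ptOf a s i)) * ∏ i ∈ valleys s, wte (ptOf a s i)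

/-- `wt_HP(D) = ∏_{p ∈ D} wt(p) · ∏_{p ∈ HP(D)} w̃t(p)` for a path starting at `(a, 0)`. -/
def wtHigh (wt wte : ℤ × ℕ → F) (a : ℤ) {L : ℕ} (s : Fin L → Bool) : F :=
  (∏ i ∈ Finset.range (L + 1), wt (ptOf a s i)) * ∏ i ∈ highPeaks s, wte (ptOf a s i)

/-- `∏_{p ∈ D₁ ∩ D₂} f(p)`, for `D₁` starting at `(-m₁,0)` and `D₂` at `(-m₂,0)`. -/
def interProd (f : ℤ × ℕ → F) (m₁ m₂ : ℕ) {L₁ L₂ : ℕ}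
    (s₁ : Fin L₁ → Bool) (s₂ : Fin L₂ → Bool) : F :=
  ∏ x ∈ interPts m₁ m₂ s₁ s₂, f (x, (aht m₁ s₁ x).toNat)

/-- The sum over `(D₁ ≤ ⋯ ≤ D_k) ∈ Dyck^k_{2n}` of
`wt_V(D₁)⋯wt_V(D_k) ∏_{i=1}^{k-1} ∏_{p ∈ D_i ∩ D_{i+1}} (1 - w̃t(p)⁻¹)`. -/
def weakSum (wt wte : ℤ × ℕ → F) (n k : ℕ) : F :=
  ∑ D ∈ weakTuples n k,
    (∏ i : Fin k, wtVal wt wte (-(n : ℤ) - 2 * (i : ℕ)) (D i)) *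
      ∏ j : Fin (k - 1),
        interProd (fun p => 1 - (wte p)⁻¹) (n + 2 * (j : ℕ)) (n + 2 * ((j : ℕ) + 1))
          (D ⟨(j : ℕ), by have := j.isLt; omega⟩)
          (D ⟨(j : ℕ) + 1, by have := j.isLt; omega⟩)

/-- The sum over `(D₁ < ⋯ < D_k) ∈ Dyck^k_{2n}` of `wt_V(D₁)⋯wt_V(D_k)`. -/
def strictSum (wt wte : ℤ × ℕ → F) (n k : ℕ) : F :=
  ∑ D ∈ strictTuples n k, ∏ i : Fin k, wtVal wt wte (-(n : ℤ) - 2 * (i : ℕ)) (D i)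

end Weights

/-! ### Schröder paths.

A path with `L` steps is encoded by `st : Fin L → Fin 3`
(`0` = up-step `(1,1)`, `1` = down-step `(1,-1)`, `2` = horizontal step `(2,0)`). -/

/-- The horizontal displacement of the `j`-th step. -/
def stepX {L : ℕ} (st : Fin L → Fin 3) (j : ℕ) : ℕ :=
  if h : j < L then (if st ⟨j, h⟩ = 2 then 2 else 1) else 0

/-- The vertical displacement of the `j`-th step. -/
def stepY {L : ℕ} (st : Fin L → Fin 3) (j : ℕ) : ℤ :=
  if h : j < L then (if st ⟨j, h⟩ = 0 then 1 else if st ⟨j, h⟩ = 1 then -1 else 0) else 0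

/-- The horizontal position (relative to the start) after `j` steps. -/
def xpos {L : ℕ} (st : Fin L → Fin 3) (j : ℕ) : ℕ := ∑ t ∈ Finset.range j, stepX st t

/-- The height after `j` steps. -/
def ypos {L : ℕ} (st : Fin L → Fin 3) (j : ℕ) : ℤ := ∑ t ∈ Finset.range j, stepY st t

/-- A (little) Schröder path of horizontal span `2m`: nonnegative heights, ends at
height `0`, and no horizontal step on the `x`-axis. -/
def IsSch (m : ℕ) {L : ℕ} (st : Fin L → Fin 3) : Prop :=
  xpos st L = 2 * m ∧ (∀ j ∈ Finset.range (L + 1), 0 ≤ ypos st j) ∧ ypos st L = 0 ∧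
    ∀ j ∈ Finset.range L, stepX st j = 2 → ypos st j ≠ 0

/-- The height of a Schröder path over the relative abscissa `x` (midpoints of
horizontal steps get the height of that horizontal step). -/
def schHeight {L : ℕ} (st : Fin L → Fin 3) (x : ℕ) : ℤ :=
  ∑ t ∈ Finset.range L, if xpos st (t + 1) ≤ x then stepY st t else 0

/-- The relative abscissa `x` is the midpoint of a horizontal step. -/
def IsHMid {L : ℕ} (st : Fin L → Fin 3) (x : ℕ) : Prop :=
  ∃ j ∈ Finset.range L, stepX st j = 2 ∧ xpos st j + 1 = x

/-- The number of horizontal steps of a Schröder path. -/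
def hsCount {L : ℕ} (st : Fin L → Fin 3) : ℕ :=
  ((Finset.range L).filter fun j => stepX st j = 2).card

/-- `wt_Sch(c, S) = c^{hs(S)} ∏_{p ∈ S} wt(p)` for a Schröder path starting at `(a,0)`. -/
def wtSch {F : Type*} [Field F] (wt : ℤ × ℕ → F) (c : F) (a : ℤ) {L : ℕ}
    (st : Fin L → Fin 3) : F :=
  c ^ hsCount st * ∏ j ∈ Finset.range (L + 1), wt (a + xpos st j, (ypos st j).toNat)

/-- `φ_V(S) = D`: the Dyck path `D` (with `L'` steps) is obtained from the Schröder
path `S` by replacing each horizontal step by a down-step followed by an up-step. -/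
def PhiVEq {L L' : ℕ} (st : Fin L → Fin 3) (s : Fin L' → Bool) : Prop :=
  ∀ x ∈ Finset.range (L' + 1),
    pht s x = schHeight st x - (if IsHMid st x then 1 else 0)

/-- `φ_HP(S) = D`: the Dyck path `D` is obtained from the Schröder path `S` by
replacing each horizontal step by an up-step followed by a down-step. -/
def PhiHPEq {L L' : ℕ} (st : Fin L → Fin 3) (s : Fin L' → Bool) : Prop :=
  ∀ x ∈ Finset.range (L' + 1),
    pht s x = schHeight st x + (if IsHMid st x then 1 else 0)

/-! ### Young diagrams, excited and pleasant diagrams, reverse plane partitions. -/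

/-- The cells (1-based, matrix coordinates) of the staircase `δ_m = (m-1, m-2, …, 1)`. -/
def deltaCells (m : ℕ) : Finset (ℕ × ℕ) :=
  ((Finset.Icc 1 m) ×ˢ (Finset.Icc 1 m)).filter fun c => c.1 + c.2 ≤ m

/-- An excited move inside the Young diagram `lam`. -/
def ExcitedStep (lam : Finset (ℕ × ℕ)) (D D' : Finset (ℕ × ℕ)) : Prop :=
  ∃ i j : ℕ, (i, j) ∈ D ∧ (i + 1, j) ∉ D ∧ (i, j + 1) ∉ D ∧ (i + 1, j + 1) ∉ D ∧
    (i + 1, j + 1) ∈ lam ∧ D' = insert (i + 1, j + 1) (D.erase (i, j))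

/-- `D` is an excited diagram of `lam/mu`. -/
def IsExcited (lam mu D : Finset (ℕ × ℕ)) : Prop :=
  Relation.ReflTransGen (ExcitedStep lam) mu D

/-- `P` is a pleasant diagram of `lam/mu`: a subset of `lam \ D` for an excited diagram `D`. -/
def IsPleasant (lam mu : Finset (ℕ × ℕ)) (P : Finset (ℕ × ℕ)) : Prop :=
  ∃ D, IsExcited lam mu D ∧ P ⊆ lam \ D

/-- `p(lam/mu)`, the number of pleasant diagrams of `lam/mu`. -/
def pleasantCount (lam mu : Finset (ℕ × ℕ)) : ℕ :=
  Set.ncard {P : Finset (ℕ × ℕ) | IsPleasant lam mu P}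

/-- A reverse plane partition on the skew shape `shape`: a filling by nonnegative
integers (vanishing off the shape) weakly increasing along rows and columns. -/
def IsRPP (shape : Finset (ℕ × ℕ)) (f : ℕ × ℕ → ℕ) : Prop :=
  (∀ c, c ∉ shape → f c = 0) ∧
    (∀ i j : ℕ, (i, j) ∈ shape → (i, j + 1) ∈ shape → f (i, j) ≤ f (i, j + 1)) ∧
    ∀ i j : ℕ, (i, j) ∈ shape → (i + 1, j) ∈ shape → f (i, j) ≤ f (i + 1, j)

/-- `∑_{π ∈ RPP(shape)} q^{|π|}` as a formal power series in `q`. -/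
def rppGF (shape : Finset (ℕ × ℕ)) : PowerSeries ℚ :=
  PowerSeries.mk fun N =>
    (Set.ncard {f : ℕ × ℕ → ℕ | IsRPP shape f ∧ ∑ c ∈ shape, f c = N} : ℚ)

/-- `(q; q)_m = ∏_{i=1}^m (1 - q^i)` as a formal power series. -/
def pochPS (m : ℕ) : PowerSeries ℚ :=
  ∏ i ∈ Finset.Icc 1 m, (1 - (PowerSeries.X : PowerSeries ℚ) ^ i)

/-- `E*_N(q) = ∑_{π ∈ Alt_N} q^{maj(κ_N π⁻¹)}` as a formal power series. -/
def EstarPS (N : ℕ) : PowerSeries ℚ :=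
  ∑ π ∈ altPerms N, (PowerSeries.X : PowerSeries ℚ) ^ majKappaInv N π

/-- `E*_m(q)/(q;q)_m` for `m ≥ 0`, and `0` for `m < 0`. -/
def EstarEntry (m : ℤ) : PowerSeries ℚ :=
  if m < 0 then 0 else EstarPS m.toNat * (pochPS m.toNat)⁻¹

/-- The Gaussian binomial coefficient `[N choose M]_q` as a formal power series. -/
def gaussPS (N M : ℕ) : PowerSeries ℚ :=
  pochPS N * (pochPS M * pochPS (N - M))⁻¹

/-!
The ribbon `δ_{n+2}/δ_n` has `2n+1` cells; read from its bottom-left end, a reverse plane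
partition on it is a sequence `g₁ ≥ g₂ ≤ g₃ ≥ ⋯ ≤ g_{2n+1}`.

Stanley's fundamental lemma of P-partitions, for labels `ℓ` injective on `[1, N]`: every
`g : [1, N] → ℕ` is uniquely `g(a) = μ_{π(a)} + #{descents of ℓ ∘ π⁻¹ at positions ≥ π(a)}`
with `π ∈ S_N` and `μ` a partition with at most `N` parts. Then `|g| = |μ| + maj(ℓ ∘ π⁻¹)`, and
for `ℓ(a) < ℓ(b)` we have `g(b) ≤ g(a) ↔ π(a) < π(b)`. Since `κ(2k ± 1) < κ(2k)`, the zigzag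
inequalities for `g` become `π(2k-1) < π(2k) > π(2k+1)`: `π` is alternating. Summing over `π`
gives `∑_{π ∈ Alt} q^{maj(κπ⁻¹)} · ∑ₘ p_N(m) qᵐ`, and `∑ₘ p_N(m) qᵐ = 1/(q;q)_N`.
-/

/-- Partitions of `m` into at most `N` parts, as weakly decreasing sequences `μ₁ ≥ ⋯ ≥ μ_N`. -/
def partitionSet (N m : ℕ) : Set (ℕ → ℕ) :=
  {μ | (∀ i ∉ Icc 1 N, μ i = 0) ∧ AntitoneOn μ (Set.Icc 1 N) ∧ ∑ i ∈ Icc 1 N, μ i = m}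

lemma finite_setOf_sum_le (N m : ℕ) :
    {f : ℕ → ℕ | (∀ i ∉ Icc 1 N, f i = 0) ∧ ∑ i ∈ Icc 1 N, f i ≤ m}.Finite := by
  refine Set.Finite.of_finite_image (f := fun f (i : Fin (N + 1)) =>
    (⟨min (f i) m, by omega⟩ : Fin (m + 1))) (Set.toFinite _) ?_
  intro f ⟨hf, hfm⟩ g ⟨hg, hgm⟩ hfg
  funext i
  by_cases hi : i ∈ Icc 1 N
  · have h := congrArg Fin.val (congrFun hfg ⟨i, by rw [mem_Icc] at hi; omega⟩)
    have := (single_le_sum (fun _ _ => Nat.zero_le _) hi).trans hfm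
    have := (single_le_sum (fun _ _ => Nat.zero_le _) hi).trans hgm
    simp only at h
    omega
  · rw [hf i hi, hg i hi]

lemma partitionSet_finite (N m : ℕ) : (partitionSet N m).Finite :=
  (finite_setOf_sum_le N m).subset fun _ ⟨hs, _, hm⟩ => ⟨hs, hm.le⟩

lemma partitionSet_zero (m : ℕ) : partitionSet 0 m = if m = 0 then {0} else ∅ := by
  ext μ
  split_ifs with hm <;> simp [partitionSet, funext_iff, hm, eq_comm, AntitoneOn]

lemma partitionSet_eq_setOf_last_eq_zero (N m : ℕ) :
    partitionSet N m = {μ | μ ∈ partitionSet (N + 1) m ∧ μ (N + 1) = 0} := by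
  ext μ
  simp only [partitionSet, Set.mem_ofPred_eq, mem_Icc, sum_Icc_succ_top (Nat.le_add_left 1 N)]
  constructor
  · rintro ⟨hs, ha, rfl⟩
    have hlast : μ (N + 1) = 0 := hs _ (by omega)
    refine ⟨⟨fun i hi => hs i (by omega), fun a ha' b hb hab => ?_, by rw [hlast, add_zero]⟩, hlast⟩
    rcases eq_or_lt_of_le hb.2 with rfl | hb'
    · rw [hlast]; exact Nat.zero_le _
    · exact ha ⟨ha'.1, by omega⟩ ⟨hb.1, by omega⟩ hab
  · rintro ⟨⟨hs, ha, hsum⟩, hlast⟩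
    refine ⟨fun i hi => ?_, ha.mono (Set.Icc_subset_Icc_right (by omega)), by omega⟩
    by_cases h : i = N + 1
    · rwa [h]
    · exact hs i (by omega)

/-- Adding a column of height `N` to the Young diagram of `ν`. -/
def addColumn (N : ℕ) (ν : ℕ → ℕ) : ℕ → ℕ := fun i => ν i + if i ∈ Icc 1 N then 1 else 0

lemma addColumn_injective (N : ℕ) : Function.Injective (addColumn N) := fun ν ν' h =>
  funext fun i => by simpa [addColumn] using congrFun h i

lemma image_addColumn_partitionSet (N m : ℕ) :
    addColumn (N + 1) '' partitionSet (N + 1) m =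
      {μ | μ ∈ partitionSet (N + 1) (m + (N + 1)) ∧ μ (N + 1) ≠ 0} := by
  ext μ
  constructor
  · rintro ⟨ν, ⟨hs, ha, hsum⟩, rfl⟩
    refine ⟨⟨fun i hi => by simp [addColumn, hi, hs i hi], fun a ha' b hb hab => ?_, ?_⟩,
      by simp [addColumn]⟩
    · simp only [addColumn, if_pos (mem_Icc.2 ha'), if_pos (mem_Icc.2 hb)]
      exact Nat.add_le_add_right (ha ha' hb hab) 1
    · simp only [addColumn]
      rw [sum_add_distrib, hsum, sum_ite_of_true fun _ hi => hi]
      simp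
  · rintro ⟨⟨hs, ha, hsum⟩, hlast⟩
    have hpos : ∀ i ∈ Icc 1 (N + 1), 1 ≤ μ i := fun i hi =>
      (Nat.one_le_iff_ne_zero.2 hlast).trans
        (ha (mem_Icc.1 hi) ⟨by omega, le_rfl⟩ (mem_Icc.1 hi).2)
    refine ⟨fun i => μ i - 1, ⟨fun i hi => by simp [hs i hi], fun a ha' b hb hab => ?_, ?_⟩, ?_⟩
    · have := ha ha' hb hab
      simp only
      omega
    · show ∑ i ∈ Icc 1 (N + 1), (μ i - 1) = m
      have h := sum_congr rfl fun i hi => Nat.sub_add_cancel (hpos i hi)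
      rw [sum_add_distrib, hsum] at h
      simp only [sum_const, Nat.card_Icc, smul_eq_mul, mul_one] at h
      omega
    · funext i
      by_cases hi : i ∈ Icc 1 (N + 1)
      · have := hpos i hi
        simp only [addColumn, if_pos hi]
        omega
      · simp [addColumn, hi, hs i hi]

lemma last_eq_zero_of_lt {N m : ℕ} {μ : ℕ → ℕ} (hμ : μ ∈ partitionSet (N + 1) m)
    (hm : m < N + 1) : μ (N + 1) = 0 := by
  obtain ⟨-, ha, hsum⟩ := hμ
  by_contra hlast
  have : ∑ _i ∈ Icc 1 (N + 1), 1 ≤ ∑ i ∈ Icc 1 (N + 1), μ i := sum_le_sum fun i hi =>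
    (Nat.one_le_iff_ne_zero.2 hlast).trans
      (ha (mem_Icc.1 hi) ⟨by omega, le_rfl⟩ (mem_Icc.1 hi).2)
  simp only [sum_const, Nat.card_Icc, smul_eq_mul, mul_one, Nat.add_sub_cancel] at this
  omega

lemma ncard_partitionSet_succ (N m : ℕ) :
    (partitionSet (N + 1) m).ncard = (partitionSet N m).ncard +
      if N + 1 ≤ m then (partitionSet (N + 1) (m - (N + 1))).ncard else 0 := by
  split_ifs with hm
  · obtain ⟨m, rfl⟩ := Nat.exists_eq_add_of_le' hm
    have hsplit : partitionSet (N + 1) (m + (N + 1)) =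
        partitionSet N (m + (N + 1)) ∪ addColumn (N + 1) '' partitionSet (N + 1) m := by
      rw [partitionSet_eq_setOf_last_eq_zero N, image_addColumn_partitionSet]
      ext μ
      simp only [Set.mem_union, Set.mem_ofPred_eq]
      tauto
    have hdisj : Disjoint (partitionSet N (m + (N + 1)))
        (addColumn (N + 1) '' partitionSet (N + 1) m) := by
      rw [partitionSet_eq_setOf_last_eq_zero N, image_addColumn_partitionSet]
      exact Set.disjoint_left.2 fun μ h h' => h'.2 h.2
    rw [Nat.add_sub_cancel, hsplit, Set.ncard_union_eq hdisj (partitionSet_finite _ _)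
      ((partitionSet_finite _ _).image _), Set.ncard_image_of_injective _ (addColumn_injective _)]
  · rw [add_zero, partitionSet_eq_setOf_last_eq_zero N]
    congr 1
    ext μ
    exact ⟨fun h => ⟨h, last_eq_zero_of_lt h (by omega)⟩, fun h => h.1⟩

def partitionGF (N : ℕ) : PowerSeries ℚ :=
  PowerSeries.mk fun m => ((partitionSet N m).ncard : ℚ)

lemma one_sub_X_pow_mul_partitionGF (N : ℕ) :
    (1 - PowerSeries.X ^ (N + 1)) * partitionGF (N + 1) = partitionGF N := by
  ext m
  rw [sub_mul, one_mul, map_sub, PowerSeries.coeff_X_pow_mul']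
  simp only [partitionGF, PowerSeries.coeff_mk]
  rw [ncard_partitionSet_succ]
  split_ifs <;> push_cast <;> ring

lemma pochPS_mul_partitionGF (N : ℕ) : pochPS N * partitionGF N = 1 := by
  induction N with
  | zero =>
    ext m
    rcases eq_or_ne m 0 with rfl | hm <;>
      simp [pochPS, partitionGF, partitionSet_zero, PowerSeries.coeff_one, *]
  | succ N ih =>
    rw [pochPS, prod_Icc_succ_top (by omega), ← pochPS, mul_assoc,
      one_sub_X_pow_mul_partitionGF, ih]

lemma inv_pochPS (N : ℕ) : (pochPS N)⁻¹ = partitionGF N := by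
  refine ((PowerSeries.eq_inv_iff_mul_eq_one ?_).2 ?_).symm
  · rw [pochPS, map_prod, prod_eq_one fun i hi => by
      simp [zero_pow (by rw [mem_Icc] at hi; omega : i ≠ 0)]]
    exact one_ne_zero
  · rw [mul_comm]
    exact pochPS_mul_partitionGF N

section Word

variable {N : ℕ} (π : Equiv.Perm (Fin N))

lemma word_of_mem {i : ℕ} (hi : i ∈ Icc 1 N) :
    word π i = (π ⟨i - 1, by rw [mem_Icc] at hi; omega⟩ : ℕ) + 1 := by
  rw [word, dif_pos (by simpa using hi)]

lemma word_succ (x : Fin N) : word π (x + 1) = π x + 1 := by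
  rw [word_of_mem π (by simp)]
  simp

lemma word_mem {i : ℕ} (hi : i ∈ Icc 1 N) : word π i ∈ Icc 1 N := by
  rw [word_of_mem π hi]
  simp

lemma word_symm_word {i : ℕ} (hi : i ∈ Icc 1 N) : word π.symm (word π i) = i := by
  rw [word_of_mem π hi, word_succ, Equiv.symm_apply_apply]
  rw [mem_Icc] at hi
  exact Nat.sub_add_cancel hi.1

lemma word_word_symm {i : ℕ} (hi : i ∈ Icc 1 N) : word π (word π.symm i) = i := by
  simpa using word_symm_word π.symm hi

lemma word_injOn {a b : ℕ} (ha : a ∈ Icc 1 N) (hb : b ∈ Icc 1 N) (h : word π a = word π b) :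
    a = b := by
  rw [← word_symm_word π ha, h, word_symm_word π hb]

lemma sum_comp_word (f : ℕ → ℕ) : ∑ a ∈ Icc 1 N, f (word π a) = ∑ i ∈ Icc 1 N, f i :=
  sum_nbij' (word π) (word π.symm) (fun _ => word_mem π) (fun _ => word_mem π.symm)
    (fun _ => word_symm_word π) (fun _ => word_word_symm π) fun _ _ => rfl

lemma eq_of_word_lt_imp {π π' : Equiv.Perm (Fin N)}
    (h : ∀ a ∈ Icc 1 N, ∀ b ∈ Icc 1 N, word π a < word π b → word π' a < word π' b) :
    π = π' := by
  have hmono : StrictMono (π' ∘ π.symm) := fun x y hxy => by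
    have := h (π.symm x + 1) (by simp) (π.symm y + 1) (by simp)
    simp only [word_succ, Equiv.apply_symm_apply] at this
    simpa using this (by simpa using hxy)
  refine Equiv.ext fun x => ?_
  simpa using (congrFun hmono.eq_id (π x)).symm

end Word

section Descents

variable {N : ℕ} {w f : ℕ → ℕ}

def descentsFrom (N : ℕ) (w : ℕ → ℕ) (i : ℕ) : ℕ := #{j ∈ Ico i N | w (j + 1) < w j}

lemma descentsFrom_of_le {i : ℕ} (h : N ≤ i) : descentsFrom N w i = 0 := by
  simp [descentsFrom, Ico_eq_empty_of_le h]

lemma descentsFrom_eq_succ_add {i : ℕ} (h : i < N) :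
    descentsFrom N w i = descentsFrom N w (i + 1) + if w (i + 1) < w i then 1 else 0 := by
  rw [descentsFrom, descentsFrom, ← Ioo_insert_left h, filter_insert, Ico_add_one_left_eq_Ioo]
  split_ifs <;> simp

lemma sum_descentsFrom : ∑ i ∈ Icc 1 N, descentsFrom N w i = majW N w := by
  calc ∑ i ∈ Icc 1 N, descentsFrom N w i
      = ∑ i ∈ Icc 1 N, ∑ _j ∈ {j ∈ Ico i N | w (j + 1) < w j}, 1 := by simp [descentsFrom]
    _ = ∑ j ∈ {j ∈ Icc 1 (N - 1) | w (j + 1) < w j}, ∑ _i ∈ Icc 1 j, 1 :=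
        sum_comm' fun i j => by simp only [mem_Icc, mem_filter, mem_Ico]; omega
    _ = majW N w := by
        rw [majW, ← sum_filter]
        simp only [sum_const, Nat.card_Icc, smul_eq_mul, mul_one, Nat.add_sub_cancel]

/-- `f` is weakly decreasing on `[1, N]`, and strictly decreasing at each descent of `w`. -/
def IsCompatible (N : ℕ) (w f : ℕ → ℕ) : Prop :=
  ∀ i, 1 ≤ i → i < N → f (i + 1) + (if w (i + 1) < w i then 1 else 0) ≤ f i

lemma isCompatible_add_descentsFrom {μ : ℕ → ℕ} (hμ : AntitoneOn μ (Set.Icc 1 N)) :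
    IsCompatible N w fun i => μ i + descentsFrom N w i := fun i h1 h2 => by
  have : μ (i + 1) ≤ μ i := hμ ⟨h1, h2.le⟩ ⟨by omega, h2⟩ (by omega)
  simp only [descentsFrom_eq_succ_add h2]
  omega

namespace IsCompatible

lemma antitoneOn (hf : IsCompatible N w f) : AntitoneOn f (Set.Icc 1 N) :=
  antitoneOn_of_add_one_le Set.ordConnected_Icc fun i _ hi hi' =>
    (Nat.le_add_right _ _).trans (hf i hi.1 hi'.2)

lemma lt_of_lt (hf : IsCompatible N w f) {i j : ℕ} (hj : 1 ≤ j) (hji : j ≤ i) (hi : i ≤ N)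
    (hw : w i < w j) : f i < f j := by
  induction i, hji using Nat.le_induction with
  | base => exact absurd hw (lt_irrefl _)
  | succ i hji ih =>
    have hstep := hf i (by omega) (by omega)
    by_cases hdes : w (i + 1) < w i
    · rw [if_pos hdes] at hstep
      exact (Nat.lt_of_succ_le hstep).trans_le
        (hf.antitoneOn ⟨hj, by omega⟩ ⟨by omega, by omega⟩ hji)
    · exact ((Nat.le_add_right _ _).trans hstep).trans_lt (ih (by omega) (by omega))

lemma descentsFrom_le (hf : IsCompatible N w f) {i : ℕ} (hi : 1 ≤ i) :
    descentsFrom N w i ≤ f i := by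
  induction hk : N - i generalizing i with
  | zero => rw [descentsFrom_of_le (by omega)]; exact Nat.zero_le _
  | succ k ih =>
    have := ih (i := i + 1) (by omega) (by omega)
    have := hf i hi (by omega)
    rw [descentsFrom_eq_succ_add (by omega)]
    omega

lemma antitoneOn_sub_descentsFrom (hf : IsCompatible N w f) :
    AntitoneOn (fun i => f i - descentsFrom N w i) (Set.Icc 1 N) :=
  antitoneOn_of_add_one_le Set.ordConnected_Icc fun i _ hi hi' => by
    have := hf i hi.1 hi'.2
    have := hf.descentsFrom_le (i := i + 1) (by omega)
    rw [descentsFrom_eq_succ_add (w := w) hi'.2]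
    omega

end IsCompatible

end Descents

section PPartition

variable {N : ℕ} (ℓ : ℕ → ℕ) (π : Equiv.Perm (Fin N))

def labelWord (i : ℕ) : ℕ := ℓ (word π.symm i)

lemma labelWord_word {a : ℕ} (ha : a ∈ Icc 1 N) : labelWord ℓ π (word π a) = ℓ a := by
  rw [labelWord, word_symm_word π ha]

def pPartition (μ : ℕ → ℕ) (a : ℕ) : ℕ :=
  if a ∈ Icc 1 N then μ (word π a) + descentsFrom N (labelWord ℓ π) (word π a) else 0

variable {ℓ π}

lemma pPartition_of_notMem {μ : ℕ → ℕ} {a : ℕ} (ha : a ∉ Icc 1 N) : pPartition ℓ π μ a = 0 :=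
  if_neg ha

lemma pPartition_word_symm (μ : ℕ → ℕ) {i : ℕ} (hi : i ∈ Icc 1 N) :
    pPartition ℓ π μ (word π.symm i) = μ i + descentsFrom N (labelWord ℓ π) i := by
  rw [pPartition, if_pos (word_mem π.symm hi), word_word_symm π hi]

lemma sum_pPartition (μ : ℕ → ℕ) :
    ∑ a ∈ Icc 1 N, pPartition ℓ π μ a = majW N (labelWord ℓ π) + ∑ i ∈ Icc 1 N, μ i := by
  rw [← sum_comp_word π.symm, sum_congr rfl fun i hi => pPartition_word_symm μ hi,
    sum_add_distrib, sum_descentsFrom, add_comm]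

theorem pPartition_le_iff {μ : ℕ → ℕ} (hμ : AntitoneOn μ (Set.Icc 1 N)) {a b : ℕ}
    (ha : a ∈ Icc 1 N) (hb : b ∈ Icc 1 N) (hab : ℓ a < ℓ b) :
    pPartition ℓ π μ b ≤ pPartition ℓ π μ a ↔ word π a < word π b := by
  have hf := isCompatible_add_descentsFrom (w := labelWord ℓ π) hμ
  have hwa := mem_Icc.1 (word_mem π ha)
  have hwb := mem_Icc.1 (word_mem π hb)
  rw [pPartition, pPartition, if_pos ha, if_pos hb]
  constructor
  · intro hle
    by_contra hge
    rcases (not_lt.1 hge).lt_or_eq with hlt | heq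
    · refine not_lt.2 hle (hf.lt_of_lt hwb.1 hlt.le hwa.2 ?_)
      rwa [labelWord_word ℓ π ha, labelWord_word ℓ π hb]
    · exact hab.ne (congrArg ℓ (word_injOn π ha hb heq.symm))
  · exact fun hlt => hf.antitoneOn hwa hwb hlt.le

theorem eq_and_eq_of_pPartition_eq (hℓ : Set.InjOn ℓ (Set.Icc 1 N)) {π' : Equiv.Perm (Fin N)}
    {μ μ' : ℕ → ℕ} (hμ : AntitoneOn μ (Set.Icc 1 N)) (hμs : ∀ i ∉ Icc 1 N, μ i = 0)
    (hμ' : AntitoneOn μ' (Set.Icc 1 N)) (hμs' : ∀ i ∉ Icc 1 N, μ' i = 0)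
    (h : pPartition ℓ π μ = pPartition ℓ π' μ') : π = π' ∧ μ = μ' := by
  have hπ : π = π' := eq_of_word_lt_imp fun a ha b hb hlt => by
    have hne : ℓ a ≠ ℓ b := fun he =>
      hlt.ne (congrArg _ (hℓ (mem_Icc.1 ha) (mem_Icc.1 hb) he))
    rcases hne.lt_or_gt with hab | hba
    · rw [← pPartition_le_iff hμ' ha hb hab, ← h, pPartition_le_iff hμ ha hb hab]
      exact hlt
    · by_contra hge
      rcases (not_lt.1 hge).lt_or_eq with hlt' | heq
      · have := (pPartition_le_iff hμ' hb ha hba).2 hlt'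
        rw [← h, pPartition_le_iff hμ hb ha hba] at this
        exact lt_asymm hlt this
      · exact hne (congrArg ℓ (word_injOn π' ha hb heq.symm))
  subst hπ
  refine ⟨rfl, funext fun i => ?_⟩
  by_cases hi : i ∈ Icc 1 N
  · have := congrFun h (word π.symm i)
    rw [pPartition_word_symm μ hi, pPartition_word_symm μ' hi] at this
    omega
  · rw [hμs i hi, hμs' i hi]

lemma isCompatible_of_strictMono {g : ℕ → ℕ} {σ : Equiv.Perm (Fin N)}
    (hσ : StrictMono fun x => toLex (OrderDual.toDual (g (σ x + 1)), ℓ (σ x + 1))) :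
    IsCompatible N (labelWord ℓ σ.symm) fun i => g (word σ i) := fun i h1 h2 => by
  let x : Fin N := ⟨i - 1, by omega⟩
  let y : Fin N := ⟨i, h2⟩
  have e1 : word σ i = σ x + 1 := by
    simpa [x, show i - 1 + 1 = i by omega] using word_succ σ x
  have e2 : word σ (i + 1) = σ y + 1 := word_succ σ y
  have := hσ (show x < y from Fin.mk_lt_mk.2 (by omega))
  simp only [Prod.Lex.toLex_lt_toLex, OrderDual.toDual_lt_toDual,
    EmbeddingLike.apply_eq_iff_eq] at this
  simp only [labelWord, Equiv.symm_symm, e1, e2]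
  split_ifs <;> omega

theorem exists_pPartition_eq (hℓ : Set.InjOn ℓ (Set.Icc 1 N)) {g : ℕ → ℕ}
    (hg : ∀ a ∉ Icc 1 N, g a = 0) :
    ∃ (π : Equiv.Perm (Fin N)) (μ : ℕ → ℕ), (∀ i ∉ Icc 1 N, μ i = 0) ∧
      AntitoneOn μ (Set.Icc 1 N) ∧ pPartition ℓ π μ = g := by
  -- sort `[1, N]` by decreasing value of `g`, breaking ties by increasing label
  let key : Fin N → ℕᵒᵈ ×ₗ ℕ := fun x => toLex (OrderDual.toDual (g (x + 1)), ℓ (x + 1))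
  have hkey : Function.Injective key := fun x y hxy => by
    have := hℓ (by simp) (by simp) (congrArg (fun p => (ofLex p).2) hxy)
    exact Fin.ext (by simpa using this)
  obtain ⟨σ, hσ⟩ : ∃ σ : Equiv.Perm (Fin N), StrictMono (key ∘ σ) :=
    ⟨_, (Tuple.monotone_sort key).strictMono_of_injective (hkey.comp (Tuple.sort key).injective)⟩
  have hf := isCompatible_of_strictMono (ℓ := ℓ) hσ
  refine ⟨σ.symm, fun i => if i ∈ Icc 1 N then g (word σ i) - descentsFrom N
    (labelWord ℓ σ.symm) i else 0, fun i hi => if_neg hi,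
    hf.antitoneOn_sub_descentsFrom.congr fun i hi => (if_pos (mem_Icc.2 hi)).symm,
    funext fun a => ?_⟩
  by_cases ha : a ∈ Icc 1 N
  · have hw := word_mem σ.symm ha
    have hd := hf.descentsFrom_le (mem_Icc.1 hw).1
    simp only [word_word_symm σ ha] at hd
    rw [pPartition, if_pos ha, if_pos hw, word_word_symm σ ha]
    omega
  · rw [pPartition_of_notMem ha, hg a ha]

end PPartition

def IsZigzag (n : ℕ) (g : ℕ → ℕ) : Prop :=
  ∀ k, 1 ≤ k → k ≤ n → g (2 * k) ≤ g (2 * k - 1) ∧ g (2 * k) ≤ g (2 * k + 1)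

lemma isAltW_iff {n : ℕ} {w : ℕ → ℕ} : IsAltW (2 * n + 1) w ↔
    ∀ k, 1 ≤ k → k ≤ n → w (2 * k - 1) < w (2 * k) ∧ w (2 * k + 1) < w (2 * k) := by
  constructor
  · intro h k hk hkn
    refine ⟨?_, (h (2 * k) (mem_Icc.2 (by omega))).2 (by omega)⟩
    simpa [show 2 * k - 1 + 1 = 2 * k by omega] using
      (h (2 * k - 1) (mem_Icc.2 (by omega))).1 (by omega)
  · intro h i hi
    simp only [mem_Icc] at hi
    refine ⟨fun hodd => ?_, fun heven => ?_⟩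
    · have := (h ((i + 1) / 2) (by omega) (by omega)).1
      rwa [show 2 * ((i + 1) / 2) - 1 = i by omega, show 2 * ((i + 1) / 2) = i + 1 by omega]
        at this
    · have := (h (i / 2) (by omega) (by omega)).2
      rwa [show 2 * (i / 2) = i by omega] at this

lemma kappaNat_injOn (N : ℕ) : Set.InjOn (kappaNat N) (Set.Icc 1 N) := by
  intro a ha b hb h
  simp only [kappaNat] at h
  split_ifs at h <;> omega

lemma kappaNat_two_mul_sub_one_lt {n k : ℕ} (hk : 1 ≤ k) (hkn : k ≤ n) :
    kappaNat (2 * n + 1) (2 * k - 1) < kappaNat (2 * n + 1) (2 * k) := by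
  simp only [kappaNat]
  split_ifs <;> omega

lemma kappaNat_two_mul_add_one_lt {n k : ℕ} (hk : 1 ≤ k) (hkn : k ≤ n) :
    kappaNat (2 * n + 1) (2 * k + 1) < kappaNat (2 * n + 1) (2 * k) := by
  simp only [kappaNat]
  split_ifs <;> omega

theorem isZigzag_pPartition_iff {n : ℕ} {π : Equiv.Perm (Fin (2 * n + 1))} {μ : ℕ → ℕ}
    (hμ : AntitoneOn μ (Set.Icc 1 (2 * n + 1))) :
    IsZigzag n (pPartition (kappaNat (2 * n + 1)) π μ) ↔ π ∈ altPerms (2 * n + 1) := by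
  simp only [altPerms, mem_filter, mem_univ, true_and, isAltW_iff, IsZigzag]
  refine forall₃_congr fun k hk hkn => and_congr ?_ ?_
  · exact pPartition_le_iff hμ (mem_Icc.2 (by omega)) (mem_Icc.2 (by omega))
      (kappaNat_two_mul_sub_one_lt hk hkn)
  · exact pPartition_le_iff hμ (mem_Icc.2 (by omega)) (mem_Icc.2 (by omega))
      (kappaNat_two_mul_add_one_lt hk hkn)

lemma majKappaInv_eq_majW_labelWord (N : ℕ) (π : Equiv.Perm (Fin N)) :
    majKappaInv N π = majW N (labelWord (kappaNat N) π) :=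
  rfl

def zigzagSet (n M : ℕ) : Set (ℕ → ℕ) :=
  {g | (∀ i ∉ Icc 1 (2 * n + 1), g i = 0) ∧ IsZigzag n g ∧ ∑ i ∈ Icc 1 (2 * n + 1), g i = M}

lemma zigzagSet_eq_biUnion (n M : ℕ) :
    zigzagSet n M = ⋃ π ∈ (altPerms (2 * n + 1) : Set (Equiv.Perm (Fin (2 * n + 1)))),
      pPartition (kappaNat (2 * n + 1)) π ''
        {μ | μ ∈ partitionSet (2 * n + 1) (M - majKappaInv (2 * n + 1) π) ∧
          majKappaInv (2 * n + 1) π ≤ M} := by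
  ext g
  simp only [Set.mem_iUnion, Set.mem_image, mem_coe, exists_prop]
  constructor
  · rintro ⟨hs, hz, hsum⟩
    obtain ⟨π, μ, hμs, hμ, rfl⟩ := exists_pPartition_eq (kappaNat_injOn _) hs
    rw [sum_pPartition, ← majKappaInv_eq_majW_labelWord] at hsum
    exact ⟨π, (isZigzag_pPartition_iff hμ).1 hz, μ, ⟨⟨hμs, hμ, by omega⟩, by omega⟩, rfl⟩
  · rintro ⟨π, hπ, μ, ⟨⟨-, hμ, hsum⟩, hle⟩, rfl⟩
    refine ⟨fun i hi => pPartition_of_notMem hi, (isZigzag_pPartition_iff hμ).2 hπ, ?_⟩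
    rw [sum_pPartition, hsum, ← majKappaInv_eq_majW_labelWord]
    exact Nat.add_sub_cancel' hle

lemma ncard_zigzagSet (n M : ℕ) : (zigzagSet n M).ncard =
    ∑ π ∈ altPerms (2 * n + 1), if majKappaInv (2 * n + 1) π ≤ M then
      (partitionSet (2 * n + 1) (M - majKappaInv (2 * n + 1) π)).ncard else 0 := by
  rw [zigzagSet_eq_biUnion, Set.Finite.ncard_biUnion (finite_toSet _)
    (fun π _ => ((partitionSet_finite _ _).subset fun _ h => h.1).image _), finsum_mem_coe_finset]
  · refine sum_congr rfl fun π _ => ?_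
    rw [Set.InjOn.ncard_image]
    · split_ifs with h <;> simp [h]
    · rintro μ ⟨⟨hμs, hμ, -⟩, -⟩ μ' ⟨⟨hμs', hμ', -⟩, -⟩ he
      exact (eq_and_eq_of_pPartition_eq (kappaNat_injOn _) hμ hμs hμ' hμs' he).2
  · rintro π - π' - hne
    refine Set.disjoint_left.2 ?_
    rintro _ ⟨μ, ⟨⟨hμs, hμ, -⟩, -⟩, rfl⟩ ⟨μ', ⟨⟨hμs', hμ', -⟩, -⟩, he⟩
    exact hne (eq_and_eq_of_pPartition_eq (kappaNat_injOn _) hμ' hμs' hμ hμs he).1.symm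

section Shape

variable {n : ℕ}

lemma mem_shape_iff {c : ℕ × ℕ} : c ∈ deltaCells (n + 2) \ deltaCells n ↔
    1 ≤ c.1 ∧ 1 ≤ c.2 ∧ n + 1 ≤ c.1 + c.2 ∧ c.1 + c.2 ≤ n + 2 := by
  simp only [mem_sdiff, deltaCells, mem_filter, mem_product, mem_Icc, not_and]
  omega

/-- The `i`-th cell of the ribbon `δ_{n+2}/δ_n`, counted from its bottom-left end. -/
def zigzagCell (n i : ℕ) : ℕ × ℕ := (n + 1 + i % 2 - (i + 1) / 2, (i + 1) / 2)

def zigzagIndex (n : ℕ) (c : ℕ × ℕ) : ℕ := n + 1 + c.2 - c.1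

lemma zigzagCell_mem {i : ℕ} (hi : i ∈ Icc 1 (2 * n + 1)) :
    zigzagCell n i ∈ deltaCells (n + 2) \ deltaCells n := by
  rw [mem_Icc] at hi
  rw [mem_shape_iff, zigzagCell]
  omega

lemma zigzagIndex_mem {c : ℕ × ℕ} (hc : c ∈ deltaCells (n + 2) \ deltaCells n) :
    zigzagIndex n c ∈ Icc 1 (2 * n + 1) := by
  rw [mem_shape_iff] at hc
  rw [mem_Icc, zigzagIndex]
  omega

lemma zigzagIndex_zigzagCell {i : ℕ} (hi : i ∈ Icc 1 (2 * n + 1)) :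
    zigzagIndex n (zigzagCell n i) = i := by
  rw [mem_Icc] at hi
  rw [zigzagCell, zigzagIndex]
  omega

lemma zigzagCell_zigzagIndex {c : ℕ × ℕ} (hc : c ∈ deltaCells (n + 2) \ deltaCells n) :
    zigzagCell n (zigzagIndex n c) = c := by
  rw [mem_shape_iff] at hc
  rw [zigzagIndex, zigzagCell, Prod.ext_iff]
  omega

lemma sum_shape_eq_sum_zigzagCell (f : ℕ × ℕ → ℕ) :
    ∑ c ∈ deltaCells (n + 2) \ deltaCells n, f c = ∑ i ∈ Icc 1 (2 * n + 1), f (zigzagCell n i) :=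
  sum_nbij' (zigzagIndex n) (zigzagCell n) (fun _ => zigzagIndex_mem) (fun _ => zigzagCell_mem)
    (fun _ => zigzagCell_zigzagIndex) (fun _ => zigzagIndex_zigzagCell)
    fun _ hc => by rw [zigzagCell_zigzagIndex hc]

/-- Along the ribbon, rows contribute `g(2k) ≤ g(2k+1)` and columns `g(2k) ≤ g(2k-1)`. -/
lemma isRPP_iff {f : ℕ × ℕ → ℕ} : IsRPP (deltaCells (n + 2) \ deltaCells n) f ↔
    (∀ c ∉ deltaCells (n + 2) \ deltaCells n, f c = 0) ∧ IsZigzag n (f ∘ zigzagCell n) := by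
  have hcell : ∀ i j, i + j = n + 1 → 1 ≤ j → j ≤ n →
      zigzagCell n (2 * j) = (i, j) ∧ zigzagCell n (2 * j - 1) = (i + 1, j) ∧
        zigzagCell n (2 * j + 1) = (i, j + 1) := by
    intro i j hij hj hjn
    simp only [zigzagCell, Prod.ext_iff]
    omega
  refine and_congr_right fun _ => ⟨fun ⟨hrow, hcol⟩ k hk hkn => ?_, fun hz => ⟨?_, ?_⟩⟩
  · obtain ⟨h0, h1, h2⟩ := hcell (n + 1 - k) k (by omega) hk hkn
    simp only [Function.comp_apply, h0, h1, h2]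
    exact ⟨hcol _ _ (mem_shape_iff.2 (by omega)) (mem_shape_iff.2 (by omega)),
      hrow _ _ (mem_shape_iff.2 (by omega)) (mem_shape_iff.2 (by omega))⟩
  · intro i j h h'
    rw [mem_shape_iff] at h h'
    obtain ⟨h0, -, h2⟩ := hcell i j (by omega) (by omega) (by omega)
    simpa [h0, h2] using (hz j (by omega) (by omega)).2
  · intro i j h h'
    rw [mem_shape_iff] at h h'
    obtain ⟨h0, h1, -⟩ := hcell i j (by omega) (by omega) (by omega)
    simpa [h0, h1] using (hz j (by omega) (by omega)).1

lemma isZigzag_congr {g g' : ℕ → ℕ} (h : ∀ i ∈ Icc 1 (2 * n + 1), g i = g' i) :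
    IsZigzag n g ↔ IsZigzag n g' :=
  forall₃_congr fun k hk hkn => by
    rw [h (2 * k) (mem_Icc.2 (by omega)), h (2 * k - 1) (mem_Icc.2 (by omega)),
      h (2 * k + 1) (mem_Icc.2 (by omega))]

def readRibbon (n : ℕ) (f : ℕ × ℕ → ℕ) (i : ℕ) : ℕ :=
  if i ∈ Icc 1 (2 * n + 1) then f (zigzagCell n i) else 0

def writeRibbon (n : ℕ) (g : ℕ → ℕ) (c : ℕ × ℕ) : ℕ :=
  if c ∈ deltaCells (n + 2) \ deltaCells n then g (zigzagIndex n c) else 0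

lemma ncard_rpp_eq_ncard_zigzagSet (M : ℕ) :
    {f | IsRPP (deltaCells (n + 2) \ deltaCells n) f ∧
      ∑ c ∈ deltaCells (n + 2) \ deltaCells n, f c = M}.ncard = (zigzagSet n M).ncard := by
  have hread : ∀ f, ∀ i ∈ Icc 1 (2 * n + 1), readRibbon n f i = f (zigzagCell n i) :=
    fun f i hi => if_pos hi
  have hwrite : ∀ g, ∀ i ∈ Icc 1 (2 * n + 1), writeRibbon n g (zigzagCell n i) = g i :=
    fun g i hi => by rw [writeRibbon, if_pos (zigzagCell_mem hi), zigzagIndex_zigzagCell hi]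
  refine Set.BijOn.ncard_eq
    (Set.InvOn.bijOn (f := readRibbon n) (f' := writeRibbon n) ⟨?_, ?_⟩ ?_ ?_)
  · rintro f ⟨hf, -⟩
    funext c
    by_cases hc : c ∈ deltaCells (n + 2) \ deltaCells n
    · rw [writeRibbon, if_pos hc, hread f _ (zigzagIndex_mem hc), zigzagCell_zigzagIndex hc]
    · rw [writeRibbon, if_neg hc, (isRPP_iff.1 hf).1 c hc]
  · rintro g ⟨hg, -⟩
    funext i
    by_cases hi : i ∈ Icc 1 (2 * n + 1)
    · rw [hread _ i hi, hwrite g i hi]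
    · rw [readRibbon, if_neg hi, hg i hi]
  · rintro f ⟨hf, rfl⟩
    refine ⟨fun i hi => if_neg hi, (isZigzag_congr (hread f)).2 (isRPP_iff.1 hf).2, ?_⟩
    rw [sum_shape_eq_sum_zigzagCell, sum_congr rfl (hread f)]
  · rintro g ⟨hg, hz, rfl⟩
    refine ⟨isRPP_iff.2 ⟨fun c hc => if_neg hc, (isZigzag_congr (hwrite g)).2 hz⟩, ?_⟩
    rw [sum_shape_eq_sum_zigzagCell, sum_congr rfl (hwrite g)]

end Shape

theorem statement_4 (n : ℕ) :
    rppGF (deltaCells (n + 2) \ deltaCells n) =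
      EstarPS (2 * n + 1) * (pochPS (2 * n + 1))⁻¹ := by
  ext M
  rw [rppGF, PowerSeries.coeff_mk, ncard_rpp_eq_ncard_zigzagSet, ncard_zigzagSet, inv_pochPS,
    EstarPS, sum_mul, map_sum]
  push_cast
  refine sum_congr rfl fun π _ => ?_
  rw [PowerSeries.coeff_X_pow_mul', partitionGF]
  split_ifs <;> simp

end Paper
end
end

section
/- For π = π_1π_2⋯π_n ∈ S_n let φ(π) = (n+1−π_n)(n+1−π_{n−1})⋯(n+1−π_1). Then φ restricts to a bijection from Alt_{2n+1} onto Ralt_{2n+1} and to a bijection from Alt_{2n} onto Alt_{2n}. Moreover, for every π ∈ Alt_{2n+1} one has (inv(φ(π)), des(φ(π)_o), des(φ(π)_e)) = (inv(π), des(π_o), des(π_e)), and for every σ ∈ Alt_{2n} one has (inv(φ(σ)), des(φ(σ)_o)) = (inv(σ), des(σ_e)). -/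
open Finset

attribute [local instance 10] Classical.propDecidable

noncomputable section

namespace Paper

/-!
`φ` is the reverse-complement `π ↦ (N+1-π_N)⋯(N+1-π_1)`, an involution. Reversal sends
position `i` to `N+1-i` and complementation flips every comparison, so a descent of `φ(π)`
at `i` is a descent of `π` at `N-i`, and the inversion `(i, j)` of `φ(π)` corresponds to the
inversion `(N+1-j, N+1-i)` of `π`. Whether `i` and `N-i` have the same parity depends on the
parity of `N`: this turns `Alt_{2n+1}` into `Ralt_{2n+1}` and `Alt_{2n}` into itself. The
odd-position subword of `φ(π)` is the reverse-complement of the odd-position subword of `π`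
when `N = 2n+1`, and of the even-position subword when `N = 2n`.
-/

section ReverseComplement

def IsRevCompl (m c : ℕ) (w w' : ℕ → ℕ) : Prop :=
  ∀ i ∈ Icc 1 m, w' i = c - w (m + 1 - i)

variable {m c : ℕ} {w w' : ℕ → ℕ}

lemma IsRevCompl.lt_iff (hw : ∀ i, w i ≤ c) (h : IsRevCompl m c w w') {i j : ℕ}
    (hi : i ∈ Icc 1 m) (hj : j ∈ Icc 1 m) :
    w' i < w' j ↔ w (m + 1 - j) < w (m + 1 - i) := by
  rw [h i hi, h j hj]
  have := hw (m + 1 - i)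
  have := hw (m + 1 - j)
  omega

lemma IsRevCompl.descent_iff (hw : ∀ i, w i ≤ c) (h : IsRevCompl m c w w') {i : ℕ}
    (hi : i ∈ Icc 1 (m - 1)) :
    (w' (i + 1) < w' i ↔ w (m - i + 1) < w (m - i)) ∧
      (w' i < w' (i + 1) ↔ w (m - i) < w (m - i + 1)) := by
  rw [mem_Icc] at hi
  have e₁ : m + 1 - i = m - i + 1 := by omega
  have e₂ : m + 1 - (i + 1) = m - i := by omega
  rw [h.lt_iff hw (by simp; omega) (by simp; omega),
    h.lt_iff hw (by simp; omega) (by simp; omega), e₁, e₂]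
  exact ⟨Iff.rfl, Iff.rfl⟩

lemma IsRevCompl.desW_eq (hw : ∀ i, w i ≤ c) (h : IsRevCompl m c w w') :
    desW m w' = desW m w := by
  refine card_nbij' (m - ·) (m - ·) ?_ ?_ ?_ ?_ <;>
    simp only [coe_filter, mem_Icc, Set.MapsTo, Set.LeftInvOn, Set.mem_ofPred_eq]
  · rintro i ⟨hi, hdes⟩
    exact ⟨by omega, (h.descent_iff hw (mem_Icc.2 hi)).1.1 hdes⟩
  · rintro i ⟨hi, hdes⟩
    refine ⟨by omega, ?_⟩
    rwa [(h.descent_iff hw (by simp; omega)).1, Nat.sub_sub_self (by omega)]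
  · intro i hi; omega
  · intro i hi; omega

lemma IsRevCompl.invW_eq (hw : ∀ i, w i ≤ c) (h : IsRevCompl m c w w') :
    invW m w' = invW m w := by
  refine card_nbij' (fun p => (m + 1 - p.2, m + 1 - p.1)) (fun p => (m + 1 - p.2, m + 1 - p.1))
    ?_ ?_ ?_ ?_ <;>
    simp only [coe_filter, mem_product, mem_Icc, Set.MapsTo, Set.LeftInvOn, Set.mem_ofPred_eq,
      Prod.forall, Prod.mk.injEq]
  · rintro i j ⟨⟨hi, hj⟩, hij, hinv⟩
    rw [h.lt_iff hw (mem_Icc.2 hj) (mem_Icc.2 hi)] at hinv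
    exact ⟨⟨by omega, by omega⟩, by omega, hinv⟩
  · rintro i j ⟨⟨hi, hj⟩, hij, hinv⟩
    refine ⟨⟨by omega, by omega⟩, by omega, ?_⟩
    rwa [h.lt_iff hw (by simp; omega) (by simp; omega), Nat.sub_sub_self (by omega),
      Nat.sub_sub_self (by omega)]
  · intro i j hij; omega
  · intro i j hij; omega

lemma IsRevCompl.isRaltW (hm : Odd m) (hw : ∀ i, w i ≤ c) (h : IsRevCompl m c w w')
    (halt : IsAltW m w) : IsRaltW m w' := by
  obtain ⟨k, rfl⟩ := hm
  intro i hi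
  have hd := h.descent_iff hw hi
  rw [mem_Icc] at hi
  have ha := halt (2 * k + 1 - i) (by simp; omega)
  exact ⟨fun _ => hd.1.2 (ha.2 (by omega)), fun _ => hd.2.2 (ha.1 (by omega))⟩

lemma IsRevCompl.isAltW_of_isRaltW (hm : Odd m) (hw : ∀ i, w i ≤ c) (h : IsRevCompl m c w w')
    (hralt : IsRaltW m w) : IsAltW m w' := by
  obtain ⟨k, rfl⟩ := hm
  intro i hi
  have hd := h.descent_iff hw hi
  rw [mem_Icc] at hi
  have ha := hralt (2 * k + 1 - i) (by simp; omega)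
  exact ⟨fun _ => hd.2.2 (ha.2 (by omega)), fun _ => hd.1.2 (ha.1 (by omega))⟩

lemma IsRevCompl.isAltW (hm : Even m) (hw : ∀ i, w i ≤ c) (h : IsRevCompl m c w w')
    (halt : IsAltW m w) : IsAltW m w' := by
  obtain ⟨k, rfl⟩ := hm
  intro i hi
  have hd := h.descent_iff hw hi
  rw [mem_Icc] at hi
  have ha := halt (k + k - i) (by simp; omega)
  exact ⟨fun _ => hd.2.2 (ha.1 (by omega)), fun _ => hd.1.2 (ha.2 (by omega))⟩

end ReverseComplement

section PhiMap

variable {N : ℕ}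

lemma phiMap_involutive : Function.Involutive (phiMap (N := N)) := fun π => by
  ext x
  simp [phiMap, revPerm]

lemma word_lt (π : Equiv.Perm (Fin N)) (i : ℕ) : word π i < N + 1 := by
  unfold word
  split_ifs
  · exact Nat.succ_lt_succ (π _).isLt
  · exact N.succ_pos

lemma isRevCompl_word_phiMap (π : Equiv.Perm (Fin N)) :
    IsRevCompl N (N + 1) (word π) (word (phiMap π)) := by
  intro i hi
  rw [mem_Icc] at hi
  have hrev : Fin.rev (⟨i - 1, by omega⟩ : Fin N) = ⟨N + 1 - i - 1, by omega⟩ :=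
    Fin.ext (by simp only [Fin.val_rev]; omega)
  simp only [word, dif_pos hi, dif_pos (show 1 ≤ N + 1 - i ∧ N + 1 - i ≤ N by omega)]
  simp only [phiMap, revPerm, Equiv.trans_apply, Equiv.coe_fn_mk, hrev, Fin.val_rev]
  have := (π ⟨N + 1 - i - 1, by omega⟩).isLt
  omega

lemma invW_word_phiMap (π : Equiv.Perm (Fin N)) : invW N (word (phiMap π)) = invW N (word π) :=
  (isRevCompl_word_phiMap π).invW_eq fun i => (word_lt π i).le

lemma phiMap_mem_raltPerms (hN : Odd N) {π : Equiv.Perm (Fin N)} (hπ : π ∈ altPerms N) :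
    phiMap π ∈ raltPerms N := by
  simp only [altPerms, raltPerms, mem_filter, mem_univ, true_and] at hπ ⊢
  exact (isRevCompl_word_phiMap π).isRaltW hN (fun i => (word_lt π i).le) hπ

lemma phiMap_mem_altPerms_of_mem_raltPerms (hN : Odd N) {π : Equiv.Perm (Fin N)}
    (hπ : π ∈ raltPerms N) : phiMap π ∈ altPerms N := by
  simp only [altPerms, raltPerms, mem_filter, mem_univ, true_and] at hπ ⊢
  exact (isRevCompl_word_phiMap π).isAltW_of_isRaltW hN (fun i => (word_lt π i).le) hπ

lemma phiMap_mem_altPerms (hN : Even N) {π : Equiv.Perm (Fin N)} (hπ : π ∈ altPerms N) :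
    phiMap π ∈ altPerms N := by
  simp only [altPerms, mem_filter, mem_univ, true_and] at hπ ⊢
  exact (isRevCompl_word_phiMap π).isAltW hN (fun i => (word_lt π i).le) hπ

end PhiMap

section Subwords

variable {n : ℕ}

lemma isRevCompl_oddWord_phiMap (π : Equiv.Perm (Fin (2 * n + 1))) :
    IsRevCompl (n + 1) (2 * n + 2) (oddWord π) (oddWord (phiMap π)) := by
  intro j hj
  rw [mem_Icc] at hj
  rw [oddWord, oddWord, isRevCompl_word_phiMap π _ (by simp; omega)]
  congr 2
  omega

lemma isRevCompl_evenWord_phiMap (π : Equiv.Perm (Fin (2 * n + 1))) :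
    IsRevCompl n (2 * n + 2) (evenWord π) (evenWord (phiMap π)) := by
  intro j hj
  rw [mem_Icc] at hj
  rw [evenWord, evenWord, isRevCompl_word_phiMap π _ (by simp; omega)]
  congr 2
  omega

lemma isRevCompl_oddWord_phiMap_of_even (σ : Equiv.Perm (Fin (2 * n))) :
    IsRevCompl n (2 * n + 1) (evenWord σ) (oddWord (phiMap σ)) := by
  intro j hj
  rw [mem_Icc] at hj
  rw [oddWord, evenWord, isRevCompl_word_phiMap σ _ (by simp; omega)]
  congr 2
  omega

end Subwords

theorem statement_8 (n : ℕ) :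
    Set.BijOn phiMap (altPerms (2 * n + 1) : Set (Equiv.Perm (Fin (2 * n + 1))))
        (raltPerms (2 * n + 1) : Set (Equiv.Perm (Fin (2 * n + 1)))) ∧
      Set.BijOn phiMap (altPerms (2 * n) : Set (Equiv.Perm (Fin (2 * n))))
        (altPerms (2 * n) : Set (Equiv.Perm (Fin (2 * n)))) ∧
      (∀ π ∈ altPerms (2 * n + 1),
        invW (2 * n + 1) (word (phiMap π)) = invW (2 * n + 1) (word π) ∧
        desW (n + 1) (oddWord (phiMap π)) = desW (n + 1) (oddWord π) ∧
        desW n (evenWord (phiMap π)) = desW n (evenWord π)) ∧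
      ∀ σ ∈ altPerms (2 * n),
        invW (2 * n) (word (phiMap σ)) = invW (2 * n) (word σ) ∧
        desW n (oddWord (phiMap σ)) = desW n (evenWord σ) := by
  have hinv {N : ℕ} {s t : Set (Equiv.Perm (Fin N))} : Set.InvOn phiMap phiMap s t :=
    ⟨fun π _ => phiMap_involutive π, fun π _ => phiMap_involutive π⟩
  have hodd : Odd (2 * n + 1) := odd_two_mul_add_one n
  have heven : Even (2 * n) := even_two_mul n
  refine ⟨?_, ?_, fun π _ => ⟨invW_word_phiMap π, ?_, ?_⟩, fun σ _ => ⟨invW_word_phiMap σ, ?_⟩⟩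
  · exact hinv.bijOn
      (fun π hπ => phiMap_mem_raltPerms hodd hπ)
      (fun π hπ => phiMap_mem_altPerms_of_mem_raltPerms hodd hπ)
  · exact hinv.bijOn
      (fun π hπ => phiMap_mem_altPerms heven hπ) (fun π hπ => phiMap_mem_altPerms heven hπ)
  · exact (isRevCompl_oddWord_phiMap π).desW_eq fun _ => (word_lt π _).le
  · exact (isRevCompl_evenWord_phiMap π).desW_eq fun _ => (word_lt π _).le
  · exact (isRevCompl_oddWord_phiMap_of_even σ).desW_eq fun _ => (word_lt σ _).le

end Paper
end
end

section
/- The map ρ* defined by ρ*(D_1,…,D_k,C) = (D_1 ∪ ⋯ ∪ D_k) ∖ C is a bijection from ND*^k_{2n} onto the set P(δ_{n+2k}/δ_n) of pleasant diagrams of δ_{n+2k}/δ_n, for all positive integers n and k. -/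
open Finset

attribute [local instance 10] Classical.propDecidable

noncomputable section

namespace Paper

/-!
Squares of `δ_{n+2k}` are lattice points of a triangle, and the squares lying on no path of a
strict tuple `D₁ < ⋯ < D_k` form an excited diagram of `δ_{n+2k}/δ_n`: for the lowest tuple they
are exactly `δ_n`, and turning a valley of some `D_i` into a peak, when `D_{i+1}` leaves room, is
an excited move of the complement. Conversely every excited move arises in this way, so excited
diagrams are exactly these complements.

Injectivity: no valley point is ever removed, and a strict tuple is determined by which of its
valley points lie on another tuple (compare the lowest paths on which two tuples differ).
Surjectivity: a pleasant diagram `P ⊆ δ_{n+2k} ∖ E` lies on the paths of the tuple of `E`; among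
all strict tuples whose paths cover `P`, one of maximal area has all its valley points in `P`,
since otherwise raising an uncovered valley (together with the stack of valleys above it) would
increase the area. Then `C` is the set of its remaining points.
-/

lemma insert_erase_insert_erase {α : Type*} [DecidableEq α] {s : Finset α} {a b c : α}
    (hb : b ∈ s) (hab : a ≠ b) (hac : a ≠ c) :
    insert b ((insert c (s.erase b)).erase a) = insert c (s.erase a) := by
  ext p
  simp only [mem_insert, mem_erase]
  by_cases hpb : p = b
  · subst hpb; simp [hb, Ne.symm hab]
  · by_cases hpa : p = a
    · subst hpa; simp [hpb, hac]
    · simp [hpb, hpa]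

lemma exists_valley_of_lt {f g : ℤ → ℤ} {a b : ℤ}
    (hf : ∀ x, a ≤ x → x < b → f (x + 1) = f x + 1 ∨ f (x + 1) = f x - 1)
    (hg : ∀ x, a ≤ x → x < b → g (x + 1) = g x + 1 ∨ g (x + 1) = g x - 1)
    (ha : f a = g a) (hb : f b = g b) {x₀ : ℤ} (hx₀ : a ≤ x₀ ∧ x₀ ≤ b) (hlt : f x₀ < g x₀) :
    ∃ w, a < w ∧ w < b ∧ f (w - 1) = f w + 1 ∧ f (w + 1) = f w + 1 ∧ f w < g w := by
  obtain ⟨w, hw, hmin⟩ := exists_min_image ((Icc a b).filter fun x => f x < g x) f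
    ⟨x₀, mem_filter.2 ⟨mem_Icc.2 hx₀, hlt⟩⟩
  simp only [mem_filter, mem_Icc] at hw hmin
  obtain ⟨⟨hw1, hw2⟩, hwlt⟩ := hw
  have hw1' : a < w := lt_of_le_of_ne hw1 (by rintro rfl; omega)
  have hw2' : w < b := lt_of_le_of_ne hw2 (by rintro rfl; omega)
  have hR : f (w + 1) = f w + 1 := by
    rcases hf w hw1 hw2' with h | h
    · exact h
    · have := hmin (w + 1); rcases hg w hw1 hw2' with h' | h' <;> omega
  have hL : f (w - 1) = f w + 1 := by
    have hf' := hf (w - 1) (by omega) (by omega)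
    have hg' := hg (w - 1) (by omega) (by omega)
    rw [sub_add_cancel] at hf' hg'
    have := hmin (w - 1)
    omega
  exact ⟨w, hw1', hw2', hL, hR, hwlt⟩

section Steps

variable {L : ℕ}

lemma pht_zero (s : Fin L → Bool) : pht s 0 = 0 := by simp [pht]

lemma pht_succ (s : Fin L → Bool) (t : ℕ) : pht s (t + 1) = pht s t + stepVal s t :=
  sum_range_succ _ _

lemma stepVal_eq_one_or_neg_one (s : Fin L → Bool) {t : ℕ} (ht : t < L) :
    stepVal s t = 1 ∨ stepVal s t = -1 := by
  unfold stepVal; rw [dif_pos ht]; cases s ⟨t, ht⟩ <;> simp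

lemma stepVal_of_le (s : Fin L → Bool) {t : ℕ} (ht : L ≤ t) : stepVal s t = 0 := by
  unfold stepVal; rw [dif_neg (by omega)]

lemma pht_add_emod_two (s : Fin L → Bool) {t : ℕ} (ht : t ≤ L) : (pht s t + t) % 2 = 0 := by
  induction t with
  | zero => simp [pht_zero]
  | succ u ih =>
    rw [pht_succ]
    have := ih (by omega)
    rcases stepVal_eq_one_or_neg_one s (show u < L by omega) with h | h <;> rw [h] <;> omega

lemma abs_pht_sub_pht_le (s : Fin L → Bool) {t u : ℕ} (htu : t ≤ u) :
    |pht s u - pht s t| ≤ (u : ℤ) - t := by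
  induction u, htu using Nat.le_induction with
  | base => simp
  | succ v _ ih =>
    rw [pht_succ]
    rcases Nat.lt_or_ge v L with hv | hv
    · rw [abs_le] at ih ⊢
      rcases stepVal_eq_one_or_neg_one s hv with h | h <;> rw [h] <;> push_cast <;> constructor <;>
        linarith [ih.1, ih.2]
    · rw [stepVal_of_le s hv, add_zero]; push_cast; linarith

lemma IsDyck.pht_bounds {s : Fin L → Bool} (hd : IsDyck s) {t : ℕ} (ht : t ≤ L) :
    0 ≤ pht s t ∧ pht s t ≤ t ∧ pht s t ≤ (L : ℤ) - t := by
  have h1 := abs_le.1 (abs_pht_sub_pht_le s (Nat.zero_le t))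
  have h2 := abs_le.1 (abs_pht_sub_pht_le s ht)
  have := hd.1 t (mem_range.2 (by omega))
  rw [pht_zero, hd.2] at *
  omega

lemma eq_of_pht_eq {s s' : Fin L → Bool} (h : ∀ t ≤ L, pht s t = pht s' t) : s = s' := by
  funext j
  have e : stepVal s j = stepVal s' j := by
    have := h j (by omega); have := h (j + 1) j.isLt
    rw [pht_succ, pht_succ] at this; omega
  unfold stepVal at e
  rw [dif_pos j.isLt, dif_pos j.isLt] at e
  cases hs : s j <;> cases hs' : s' j <;> simp_all

/-- Negates the steps `t - 1` and `t`; at a corner (a peak or a valley) this swaps them. -/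
def flipCorner (s : Fin L → Bool) (t : ℕ) : Fin L → Bool :=
  fun j => if (j : ℕ) = t - 1 ∨ (j : ℕ) = t then !s j else s j

lemma flipCorner_flipCorner (s : Fin L → Bool) (t : ℕ) : flipCorner (flipCorner s t) t = s := by
  funext j; unfold flipCorner; split_ifs <;> simp

lemma stepVal_flipCorner (s : Fin L → Bool) (t u : ℕ) :
    stepVal (flipCorner s t) u = if u = t - 1 ∨ u = t then -stepVal s u else stepVal s u := by
  unfold stepVal flipCorner
  by_cases hu : u < L
  · simp only [dif_pos hu]
    split_ifs <;> simp_all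
  · simp [dif_neg hu]

lemma pht_flipCorner (s : Fin L → Bool) {t : ℕ} (ht : 1 ≤ t)
    (hc : stepVal s (t - 1) + stepVal s t = 0) (u : ℕ) :
    pht (flipCorner s t) u = pht s u - if u = t then 2 * stepVal s (t - 1) else 0 := by
  induction u with
  | zero => simp [pht_zero, show (0 : ℕ) ≠ t by omega]
  | succ v ih =>
    rw [pht_succ, pht_succ, ih, stepVal_flipCorner]
    by_cases h1 : v = t - 1
    · subst h1; simp [show t - 1 ≠ t by omega, show t - 1 + 1 = t by omega]; ring
    · by_cases h2 : v = t
      · subst h2; simp; omega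
      · simp [h1, h2, show v + 1 ≠ t by omega]

end Steps

section Centered

variable {m : ℕ}

lemma aht_neg_self (s : Fin (2 * m) → Bool) : aht m s (-m) = 0 := by
  simp [aht, pht_zero]

lemma IsDyck.aht_self {s : Fin (2 * m) → Bool} (hd : IsDyck s) : aht m s m = 0 := by
  rw [aht, show ((m : ℤ) + m).toNat = 2 * m by omega]; exact hd.2

lemma aht_add_one (s : Fin (2 * m) → Bool) {x : ℤ} (hx : -(m : ℤ) ≤ x) :
    aht m s (x + 1) = aht m s x + stepVal s (x + m).toNat := by
  rw [aht, aht, show (x + 1 + m).toNat = (x + m).toNat + 1 by omega, pht_succ]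

lemma aht_add_one_eq (s : Fin (2 * m) → Bool) {x : ℤ} (h1 : -(m : ℤ) ≤ x) (h2 : x < m) :
    aht m s (x + 1) = aht m s x + 1 ∨ aht m s (x + 1) = aht m s x - 1 := by
  rw [aht_add_one s h1]
  rcases stepVal_eq_one_or_neg_one s (show (x + m).toNat < 2 * m by omega) with h | h <;>
    simp [h, sub_eq_add_neg]

lemma aht_sub_aht_le_one (s : Fin (2 * m) → Bool) {u v : ℤ} (hu : -(m : ℤ) ≤ u)
    (hv : -(m : ℤ) ≤ v) (huv : u ≤ v + 1) (hvu : v ≤ u + 1) :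
    aht m s v - aht m s u ≤ 1 ∧ aht m s u - aht m s v ≤ 1 := by
  rw [aht, aht]
  rcases le_total u v with h | h
  · have := abs_le.1 (abs_pht_sub_pht_le s (t := (u + m).toNat) (u := (v + m).toNat) (by omega))
    omega
  · have := abs_le.1 (abs_pht_sub_pht_le s (t := (v + m).toNat) (u := (u + m).toNat) (by omega))
    omega

lemma aht_add_emod_two (s : Fin (2 * m) → Bool) {x : ℤ} (h1 : -(m : ℤ) ≤ x) (h2 : x ≤ m) :
    (aht m s x + x + m) % 2 = 0 := by
  have := pht_add_emod_two s (t := (x + m).toNat) (by omega)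
  rw [aht]; omega

lemma IsDyck.aht_bounds {s : Fin (2 * m) → Bool} (hd : IsDyck s) {x : ℤ} (h1 : -(m : ℤ) ≤ x)
    (h2 : x ≤ m) : 0 ≤ aht m s x ∧ aht m s x ≤ m + x ∧ aht m s x ≤ m - x := by
  have := hd.pht_bounds (t := (x + m).toNat) (by omega)
  rw [aht]; push_cast at this; omega

lemma isDyck_iff_aht {s : Fin (2 * m) → Bool} :
    IsDyck s ↔ (∀ x : ℤ, -(m : ℤ) ≤ x → x ≤ m → 0 ≤ aht m s x) ∧ aht m s m = 0 := by
  unfold IsDyck aht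
  rw [show ((m : ℤ) + m).toNat = 2 * m by omega]
  refine and_congr_left fun _ => ⟨fun h x h1 h2 => h _ (mem_range.2 (by omega)), fun h t ht => ?_⟩
  have := h (t - m) (by omega) (by rw [mem_range] at ht; omega)
  rwa [show ((t : ℤ) - m + m).toNat = t by omega] at this

lemma mem_pathPoints_iff {s : Fin (2 * m) → Bool} {p : ℤ × ℤ} :
    p ∈ pathPoints m s ↔ -(m : ℤ) ≤ p.1 ∧ p.1 ≤ m ∧ p.2 = aht m s p.1 := by
  unfold pathPoints aht
  simp only [mem_image, mem_range]
  constructor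
  · rintro ⟨t, ht, rfl⟩
    refine ⟨by omega, by omega, ?_⟩
    simp only [show (-(m : ℤ) + t + m).toNat = t by omega]
  · rintro ⟨h1, h2, h3⟩
    refine ⟨(p.1 + m).toNat, by omega, ?_⟩
    rw [show -(m : ℤ) + ((p.1 + m).toNat : ℤ) = p.1 by omega, ← h3]

lemma eq_of_aht_eq {s s' : Fin (2 * m) → Bool}
    (h : ∀ x : ℤ, -(m : ℤ) ≤ x → x ≤ m → aht m s x = aht m s' x) : s = s' :=
  eq_of_pht_eq fun t ht => by
    simpa [aht, show ((t : ℤ) - m + m).toNat = t by omega] using h (t - m) (by omega) (by omega)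

def IsValley (m : ℕ) (s : Fin (2 * m) → Bool) (x : ℤ) : Prop :=
  -(m : ℤ) < x ∧ x < m ∧ aht m s (x - 1) = aht m s x + 1 ∧ aht m s (x + 1) = aht m s x + 1

lemma isValley_iff_mem_valleys {s : Fin (2 * m) → Bool} {x : ℤ} (h1 : -(m : ℤ) ≤ x)
    (h2 : x ≤ m) : IsValley m s x ↔ (x + m).toNat ∈ valleys s := by
  unfold IsValley valleys
  simp only [mem_filter, mem_Icc]
  constructor
  · rintro ⟨h1, h2, hl, hr⟩
    have el := aht_add_one s (x := x - 1) (by omega)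
    have er := aht_add_one s (x := x) (by omega)
    rw [sub_add_cancel, show (x - 1 + m).toNat = (x + m).toNat - 1 by omega] at el
    exact ⟨⟨by omega, by omega⟩, by omega, by omega⟩
  · rintro ⟨⟨ht1, ht2⟩, hl, hr⟩
    have el := aht_add_one s (x := x - 1) (by omega)
    have er := aht_add_one s (x := x) (by omega)
    rw [sub_add_cancel, show (x - 1 + m).toNat = (x + m).toNat - 1 by omega] at el
    exact ⟨by omega, by omega, by omega, by omega⟩

lemma mem_nonValleyPoints_iff {s : Fin (2 * m) → Bool} {p : ℤ × ℤ} :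
    p ∈ nonValleyPoints m s ↔ p ∈ pathPoints m s ∧ ¬IsValley m s p.1 := by
  rw [mem_pathPoints_iff]
  unfold nonValleyPoints aht
  simp only [mem_image, mem_filter, mem_range]
  constructor
  · rintro ⟨t, ⟨ht, hv⟩, rfl⟩
    have e : (-(m : ℤ) + t + m).toNat = t := by omega
    refine ⟨⟨by omega, by omega, by simp only [e]⟩, ?_⟩
    rwa [isValley_iff_mem_valleys (by omega) (by omega), e]
  · rintro ⟨⟨h1, h2, h3⟩, hv⟩
    rw [isValley_iff_mem_valleys h1 h2] at hv
    refine ⟨(p.1 + m).toNat, ⟨by omega, hv⟩, ?_⟩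
    rw [show -(m : ℤ) + ((p.1 + m).toNat : ℤ) = p.1 by omega, ← h3]

def flipAt (m : ℕ) (s : Fin (2 * m) → Bool) (x : ℤ) : Fin (2 * m) → Bool :=
  flipCorner s (x + m).toNat

lemma flipAt_flipAt (s : Fin (2 * m) → Bool) (x : ℤ) : flipAt m (flipAt m s x) x = s :=
  flipCorner_flipCorner s _

lemma aht_flipAt {s : Fin (2 * m) → Bool} {x : ℤ} (h1 : -(m : ℤ) < x) (h2 : x < m)
    (hc : aht m s (x - 1) = aht m s (x + 1)) (y : ℤ) :
    aht m (flipAt m s x) y = if y = x then 2 * aht m s (x - 1) - aht m s x else aht m s y := by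
  have el := aht_add_one s (x := x - 1) (by omega)
  have er := aht_add_one s (x := x) (by omega)
  rw [sub_add_cancel, show (x - 1 + m).toNat = (x + m).toNat - 1 by omega] at el
  unfold flipAt
  rw [aht, pht_flipCorner s (by omega) (by omega)]
  by_cases hy : y = x
  · subst hy; simp only [if_true]; rw [← aht]; omega
  · rw [if_neg (by omega), if_neg hy, sub_zero, aht]

lemma IsDyck.flipAt {s : Fin (2 * m) → Bool} (hd : IsDyck s) {x : ℤ} (h1 : -(m : ℤ) < x)
    (h2 : x < m) (hc : aht m s (x - 1) = aht m s (x + 1))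
    (hnn : 0 ≤ 2 * aht m s (x - 1) - aht m s x) : IsDyck (flipAt m s x) := by
  rw [isDyck_iff_aht] at hd ⊢
  simp only [aht_flipAt h1 h2 hc]
  refine ⟨fun y hy1 hy2 => ?_, by rw [if_neg (by omega), hd.2]⟩
  split_ifs
  · exact hnn
  · exact hd.1 y hy1 hy2

end Centered

section Tuples

variable {n k : ℕ}

lemma mem_strictTuples_iff {D : DyckTuple n k} :
    D ∈ strictTuples n k ↔ (∀ i, IsDyck (D i)) ∧ ∀ i j : Fin k, (i : ℕ) + 1 = j →
      ∀ x : ℤ, -((n + 2 * (i : ℕ) : ℕ) : ℤ) ≤ x → x ≤ ((n + 2 * (i : ℕ) : ℕ) : ℤ) →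
        aht (n + 2 * (i : ℕ)) (D i) x < aht (n + 2 * (j : ℕ)) (D j) x := by
  simp only [strictTuples, mem_filter, mem_univ, true_and, PathLT, mem_Icc, and_imp]
  refine and_congr_right fun _ => ⟨fun h i j hij x => ?_, fun h i hi x => ?_⟩
  · obtain ⟨i, hi⟩ := i; obtain ⟨j, hj⟩ := j
    simp only at hij; subst hij
    exact h i hj x
  · exact h ⟨i, by omega⟩ ⟨i + 1, hi⟩ rfl x

lemma aht_sub_aht_emod_two (D : DyckTuple n k) {i j : Fin k} {x : ℤ}
    (hi1 : -((n + 2 * (i : ℕ) : ℕ) : ℤ) ≤ x) (hi2 : x ≤ ((n + 2 * (i : ℕ) : ℕ) : ℤ))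
    (hj1 : -((n + 2 * (j : ℕ) : ℕ) : ℤ) ≤ x) (hj2 : x ≤ ((n + 2 * (j : ℕ) : ℕ) : ℤ)) :
    (aht (n + 2 * (i : ℕ)) (D i) x - aht (n + 2 * (j : ℕ)) (D j) x) % 2 = 0 := by
  have := aht_add_emod_two (D i) hi1 hi2
  have := aht_add_emod_two (D j) hj1 hj2
  omega

/-- All heights over a given abscissa have the same parity, so each step up a strict tuple
gains at least `2`. -/
lemma aht_add_le_aht {D : DyckTuple n k} (hD : D ∈ strictTuples n k) {i j : Fin k}
    (hij : (i : ℕ) ≤ j) {x : ℤ}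
    (hx1 : -((n + 2 * (i : ℕ) : ℕ) : ℤ) ≤ x) (hx2 : x ≤ ((n + 2 * (i : ℕ) : ℕ) : ℤ)) :
    aht (n + 2 * (i : ℕ)) (D i) x + 2 * ((j : ℤ) - i) ≤ aht (n + 2 * (j : ℕ)) (D j) x := by
  obtain ⟨d, hd⟩ := Nat.exists_eq_add_of_le hij
  induction d generalizing j with
  | zero => rw [show j = i from Fin.ext (by omega)]; simp
  | succ d ih =>
    let j' : Fin k := ⟨i + d, by omega⟩
    have hj' : (j' : ℕ) = i + d := rfl
    have h1 := ih (j := j') (by omega) rfl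
    have h2 := (mem_strictTuples_iff.1 hD).2 j' j (by omega) x (by omega) (by omega)
    have h3 := aht_sub_aht_emod_two D (i := j') (j := j) (x := x) (by omega) (by omega)
      (by omega) (by omega)
    omega

lemma aht_lt_aht {D : DyckTuple n k} (hD : D ∈ strictTuples n k) {i j : Fin k}
    (hij : (i : ℕ) < j) {x : ℤ}
    (hx1 : -((n + 2 * (i : ℕ) : ℕ) : ℤ) ≤ x) (hx2 : x ≤ ((n + 2 * (i : ℕ) : ℕ) : ℤ)) :
    aht (n + 2 * (i : ℕ)) (D i) x < aht (n + 2 * (j : ℕ)) (D j) x := by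
  have := aht_add_le_aht hD hij.le hx1 hx2
  omega

/-- `D₁ ∪ ⋯ ∪ D_k`. -/
def tuplePoints (D : DyckTuple n k) : Finset (ℤ × ℤ) :=
  univ.biUnion fun i : Fin k => pathPoints (n + 2 * (i : ℕ)) (D i)

lemma mem_tuplePoints {D : DyckTuple n k} {p : ℤ × ℤ} :
    p ∈ tuplePoints D ↔ ∃ i : Fin k, -((n + 2 * (i : ℕ) : ℕ) : ℤ) ≤ p.1 ∧
      p.1 ≤ ((n + 2 * (i : ℕ) : ℕ) : ℤ) ∧ p.2 = aht (n + 2 * (i : ℕ)) (D i) p.1 := by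
  simp [tuplePoints, mem_pathPoints_iff]

lemma index_eq_of_aht_eq {D : DyckTuple n k} (hD : D ∈ strictTuples n k) {i j : Fin k} {x : ℤ}
    (hi1 : -((n + 2 * (i : ℕ) : ℕ) : ℤ) ≤ x) (hi2 : x ≤ ((n + 2 * (i : ℕ) : ℕ) : ℤ))
    (hj1 : -((n + 2 * (j : ℕ) : ℕ) : ℤ) ≤ x) (hj2 : x ≤ ((n + 2 * (j : ℕ) : ℕ) : ℤ))
    (h : aht (n + 2 * (i : ℕ)) (D i) x = aht (n + 2 * (j : ℕ)) (D j) x) : i = j := by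
  rcases lt_trichotomy (i : ℕ) j with hij | hij | hij
  · exact absurd h (aht_lt_aht hD hij hi1 hi2).ne
  · exact Fin.ext hij
  · exact absurd h (aht_lt_aht hD hij hj1 hj2).ne'

def flipTuple (D : DyckTuple n k) (i : Fin k) (x : ℤ) : DyckTuple n k :=
  Function.update D i (flipAt _ (D i) x)

lemma flipTuple_of_ne (D : DyckTuple n k) {i j : Fin k} (x : ℤ) (hj : j ≠ i) :
    flipTuple D i x j = D j :=
  Function.update_of_ne hj _ _

lemma flipTuple_flipTuple (D : DyckTuple n k) (i : Fin k) (x : ℤ) :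
    flipTuple (flipTuple D i x) i x = D := by
  funext j
  by_cases hj : j = i
  · subst hj; simp [flipTuple, flipAt_flipAt]
  · simp only [flipTuple_of_ne _ _ hj]

variable {D : DyckTuple n k} {i : Fin k} {x : ℤ}

lemma aht_flipTuple (h1 : -((n + 2 * (i : ℕ) : ℕ) : ℤ) < x) (h2 : x < ((n + 2 * (i : ℕ) : ℕ) : ℤ))
    (hc : aht (n + 2 * (i : ℕ)) (D i) (x - 1) = aht (n + 2 * (i : ℕ)) (D i) (x + 1))
    (j : Fin k) (z : ℤ) :
    aht (n + 2 * (j : ℕ)) (flipTuple D i x j) z =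
      if j = i ∧ z = x then 2 * aht (n + 2 * (i : ℕ)) (D i) (x - 1) - aht (n + 2 * (i : ℕ)) (D i) x
      else aht (n + 2 * (j : ℕ)) (D j) z := by
  by_cases hj : j = i
  · subst hj
    simp only [flipTuple, Function.update_self, aht_flipAt h1 h2 hc, true_and]
  · simp only [flipTuple_of_ne _ _ hj, hj, false_and, if_false]

lemma flipTuple_mem_strictTuples (hD : D ∈ strictTuples n k)
    (h1 : -((n + 2 * (i : ℕ) : ℕ) : ℤ) < x) (h2 : x < ((n + 2 * (i : ℕ) : ℕ) : ℤ))
    (hc : aht (n + 2 * (i : ℕ)) (D i) (x - 1) = aht (n + 2 * (i : ℕ)) (D i) (x + 1))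
    (hnn : 0 ≤ 2 * aht (n + 2 * (i : ℕ)) (D i) (x - 1) - aht (n + 2 * (i : ℕ)) (D i) x)
    (hbelow : ∀ j : Fin k, (j : ℕ) + 1 = i → -((n + 2 * (j : ℕ) : ℕ) : ℤ) ≤ x →
      x ≤ ((n + 2 * (j : ℕ) : ℕ) : ℤ) → aht (n + 2 * (j : ℕ)) (D j) x <
        2 * aht (n + 2 * (i : ℕ)) (D i) (x - 1) - aht (n + 2 * (i : ℕ)) (D i) x)
    (habove : ∀ j : Fin k, (i : ℕ) + 1 = j →
      2 * aht (n + 2 * (i : ℕ)) (D i) (x - 1) - aht (n + 2 * (i : ℕ)) (D i) x <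
        aht (n + 2 * (j : ℕ)) (D j) x) :
    flipTuple D i x ∈ strictTuples n k := by
  obtain ⟨hdy, hlt⟩ := mem_strictTuples_iff.1 hD
  refine mem_strictTuples_iff.2 ⟨fun j => ?_, fun a b hab z hz1 hz2 => ?_⟩
  · by_cases hj : j = i
    · subst hj
      simpa [flipTuple] using (hdy j).flipAt h1 h2 hc hnn
    · simpa only [flipTuple_of_ne _ _ hj] using hdy j
  · have := hlt a b hab z hz1 hz2
    rw [aht_flipTuple h1 h2 hc, aht_flipTuple h1 h2 hc]
    by_cases ha : a = i ∧ z = x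
    · obtain ⟨rfl, rfl⟩ : a = i ∧ z = x := ha
      rw [if_pos ⟨rfl, rfl⟩, if_neg (by rintro ⟨rfl, -⟩; omega)]
      exact habove b hab
    · by_cases hb : b = i ∧ z = x
      · obtain ⟨rfl, rfl⟩ : b = i ∧ z = x := hb
        rw [if_neg ha, if_pos ⟨rfl, rfl⟩]
        exact hbelow a hab hz1 hz2
      · rw [if_neg ha, if_neg hb]
        exact this

lemma tuplePoints_flipTuple (hD : D ∈ strictTuples n k)
    (h1 : -((n + 2 * (i : ℕ) : ℕ) : ℤ) < x) (h2 : x < ((n + 2 * (i : ℕ) : ℕ) : ℤ))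
    (hc : aht (n + 2 * (i : ℕ)) (D i) (x - 1) = aht (n + 2 * (i : ℕ)) (D i) (x + 1)) :
    tuplePoints (flipTuple D i x) =
      insert (x, 2 * aht (n + 2 * (i : ℕ)) (D i) (x - 1) - aht (n + 2 * (i : ℕ)) (D i) x)
        ((tuplePoints D).erase (x, aht (n + 2 * (i : ℕ)) (D i) x)) := by
  ext ⟨z, w⟩
  simp only [mem_insert, mem_erase, mem_tuplePoints, aht_flipTuple h1 h2 hc, Prod.mk.injEq]
  constructor
  · rintro ⟨j, hj1, hj2, hj3⟩
    by_cases hji : j = i ∧ z = x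
    · left; rw [if_pos hji] at hj3; exact ⟨hji.2, hj3⟩
    · right
      rw [if_neg hji] at hj3
      refine ⟨fun h => hji ?_, j, hj1, hj2, hj3⟩
      obtain ⟨rfl, rfl⟩ := Prod.mk.inj h
      exact ⟨index_eq_of_aht_eq hD hj1 hj2 h1.le h2.le hj3.symm, rfl⟩
  · rintro (⟨rfl, rfl⟩ | ⟨hne, j, hj1, hj2, hj3⟩)
    · exact ⟨i, h1.le, h2.le, by simp⟩
    · refine ⟨j, hj1, hj2, ?_⟩
      rw [if_neg, hj3]
      rintro ⟨rfl, rfl⟩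
      exact hne (by rw [hj3])

def area (D : DyckTuple n k) : ℤ :=
  ∑ j : Fin k, ∑ z ∈ Icc (-((n + 2 * (j : ℕ) : ℕ) : ℤ)) ((n + 2 * (j : ℕ) : ℕ) : ℤ),
    aht (n + 2 * (j : ℕ)) (D j) z

lemma area_nonneg (hD : D ∈ strictTuples n k) : 0 ≤ area D :=
  sum_nonneg fun j _ => sum_nonneg fun z hz => by
    rw [mem_Icc] at hz
    exact ((mem_strictTuples_iff.1 hD).1 j |>.aht_bounds hz.1 hz.2).1

lemma area_flipTuple (h1 : -((n + 2 * (i : ℕ) : ℕ) : ℤ) < x)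
    (h2 : x < ((n + 2 * (i : ℕ) : ℕ) : ℤ))
    (hc : aht (n + 2 * (i : ℕ)) (D i) (x - 1) = aht (n + 2 * (i : ℕ)) (D i) (x + 1)) :
    area (flipTuple D i x) = area D +
      (2 * aht (n + 2 * (i : ℕ)) (D i) (x - 1) - 2 * aht (n + 2 * (i : ℕ)) (D i) x) := by
  have key : ∀ (j : Fin k) (z : ℤ), aht (n + 2 * (j : ℕ)) (flipTuple D i x j) z =
      aht (n + 2 * (j : ℕ)) (D j) z + if j = i then (if z = x then
        2 * aht (n + 2 * (i : ℕ)) (D i) (x - 1) - 2 * aht (n + 2 * (i : ℕ)) (D i) x else 0)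
        else 0 := by
    intro j z
    rw [aht_flipTuple h1 h2 hc]
    by_cases hj : j = i
    · subst hj; by_cases hz : z = x
      · subst hz; simp only [and_self, if_true]; ring
      · simp [hz]
    · simp [hj]
  simp only [area, key, sum_add_distrib, add_right_inj]
  rw [Fintype.sum_eq_single i fun j hj => by simp [hj]]
  have hx : x ∈ Icc (-((n + 2 * (i : ℕ) : ℕ) : ℤ)) ((n + 2 * (i : ℕ) : ℕ) : ℤ) :=
    mem_Icc.2 ⟨h1.le, h2.le⟩
  simp only [↓reduceIte]
  rw [sum_ite_eq', if_pos hx]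

end Tuples

section Cells

def cellPoint (M : ℕ) (c : ℕ × ℕ) : ℤ × ℤ := ((c.2 : ℤ) - c.1, (M : ℤ) - c.1 - c.2)

@[simp]
lemma cellPoint_mk (M a b : ℕ) : cellPoint M (a, b) = ((b : ℤ) - a, (M : ℤ) - a - b) := rfl

lemma cellPoint_injective (M : ℕ) : Function.Injective (cellPoint M) := by
  intro c c' h
  simp only [cellPoint, Prod.mk.injEq] at h
  ext <;> omega

lemma mem_deltaCells_iff {M : ℕ} {c : ℕ × ℕ} :
    c ∈ deltaCells M ↔ 1 ≤ c.1 ∧ 1 ≤ c.2 ∧ c.1 + c.2 ≤ M := by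
  simp only [deltaCells, mem_filter, mem_product, mem_Icc]
  omega

lemma exists_cellPoint_eq {M : ℕ} {p : ℤ × ℤ} (h0 : 0 ≤ p.2) (hl : p.2 + p.1 ≤ (M : ℤ) - 2)
    (hr : p.2 - p.1 ≤ (M : ℤ) - 2) (hpar : (p.1 + p.2 + M) % 2 = 0) :
    ∃ c ∈ deltaCells M, cellPoint M c = p := by
  refine ⟨(((M - p.2 - p.1) / 2).toNat, ((M - p.2 + p.1) / 2).toNat),
    mem_deltaCells_iff.2 ⟨by omega, by omega, by omega⟩, ?_⟩
  simp only [cellPoint, Prod.ext_iff]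
  omega

variable {n k : ℕ}

lemma exists_cellPoint_eq_of_mem_tuplePoints {D : DyckTuple n k} (hdy : ∀ i, IsDyck (D i))
    {p : ℤ × ℤ} (hp : p ∈ tuplePoints D) :
    ∃ c ∈ deltaCells (n + 2 * k), cellPoint (n + 2 * k) c = p := by
  obtain ⟨i, h1, h2, h3⟩ := mem_tuplePoints.1 hp
  have := (hdy i).aht_bounds h1 h2
  have := aht_add_emod_two (D i) h1 h2
  have := i.isLt
  exact exists_cellPoint_eq (by omega) (by push_cast at *; omega) (by push_cast at *; omega)
    (by push_cast at *; omega)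

def complementCells (D : DyckTuple n k) : Finset (ℕ × ℕ) :=
  (deltaCells (n + 2 * k)).filter fun c => cellPoint (n + 2 * k) c ∉ tuplePoints D

lemma mem_complementCells {D : DyckTuple n k} {c : ℕ × ℕ} :
    c ∈ complementCells D ↔ c ∈ deltaCells (n + 2 * k) ∧ cellPoint (n + 2 * k) c ∉ tuplePoints D :=
  mem_filter

lemma complementCells_eq_of_tuplePoints_eq {D D' : DyckTuple n k} {c c' : ℕ × ℕ}
    (hc' : c' ∈ deltaCells (n + 2 * k)) (hne : c ≠ c')
    (h : tuplePoints D' =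
      insert (cellPoint (n + 2 * k) c) ((tuplePoints D).erase (cellPoint (n + 2 * k) c'))) :
    complementCells D' = insert c' ((complementCells D).erase c) := by
  ext d
  simp only [mem_insert, mem_erase, mem_complementCells, h, (cellPoint_injective _).eq_iff]
  by_cases hd : d = c'
  · subst hd; simp [hc', Ne.symm hne]
  · by_cases hd' : d = c <;> simp [hd, hd', hne, (cellPoint_injective _).eq_iff]

end Cells

section Raise

variable {n k : ℕ} {D : DyckTuple n k} {i : Fin k} {x : ℤ}

lemma flipTuple_mem_strictTuples_of_isValley (hD : D ∈ strictTuples n k)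
    (hv : IsValley _ (D i) x)
    (habove : ∀ j : Fin k, (i : ℕ) + 1 = j →
      aht (n + 2 * (i : ℕ)) (D i) x + 2 < aht (n + 2 * (j : ℕ)) (D j) x) :
    flipTuple D i x ∈ strictTuples n k := by
  obtain ⟨h1, h2, hl, hr⟩ := hv
  have := ((mem_strictTuples_iff.1 hD).1 i).aht_bounds h1.le h2.le
  refine flipTuple_mem_strictTuples hD h1 h2 (by omega) (by omega) (fun j hj hj1 hj2 => ?_)
    (fun j hj => by have := habove j hj; omega)
  have := aht_lt_aht hD (show (j : ℕ) < i by omega) hj1 hj2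
  omega

lemma tuplePoints_flipTuple_of_isValley (hD : D ∈ strictTuples n k) (hv : IsValley _ (D i) x) :
    tuplePoints (flipTuple D i x) =
      insert (x, aht (n + 2 * (i : ℕ)) (D i) x + 2)
        ((tuplePoints D).erase (x, aht (n + 2 * (i : ℕ)) (D i) x)) := by
  obtain ⟨h1, h2, hl, hr⟩ := hv
  rw [tuplePoints_flipTuple hD h1 h2 (by omega), hl]
  congr 2
  ring

lemma aht_add_two_notMem_tuplePoints (hD : D ∈ strictTuples n k)
    (h1 : -((n + 2 * (i : ℕ) : ℕ) : ℤ) ≤ x) (h2 : x ≤ ((n + 2 * (i : ℕ) : ℕ) : ℤ))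
    (habove : ∀ j : Fin k, (i : ℕ) + 1 = j →
      aht (n + 2 * (i : ℕ)) (D i) x + 2 < aht (n + 2 * (j : ℕ)) (D j) x) :
    (x, aht (n + 2 * (i : ℕ)) (D i) x + 2) ∉ tuplePoints D := by
  rw [mem_tuplePoints]
  rintro ⟨j, hj1, hj2, hj3⟩
  simp only at hj1 hj2 hj3
  rcases lt_trichotomy (j : ℕ) i with hij | hij | hij
  · have := aht_lt_aht hD hij hj1 hj2; omega
  · rw [show j = i from Fin.ext hij] at hj3; omega
  · let i' : Fin k := ⟨i + 1, by omega⟩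
    have hi' : (i' : ℕ) = i + 1 := rfl
    have := habove i' rfl
    have := aht_add_le_aht hD (i := i') (j := j) (by omega) (x := x) (by omega) (by omega)
    push_cast at *
    omega

end Raise

section Excited

variable {n k : ℕ} {D : DyckTuple n k}

lemma excitedStep_complementCells_flipTuple (hD : D ∈ strictTuples n k) {i : Fin k} {x : ℤ}
    (hv : IsValley _ (D i) x)
    (habove : ∀ j : Fin k, (i : ℕ) + 1 = j →
      aht (n + 2 * (i : ℕ)) (D i) x + 2 < aht (n + 2 * (j : ℕ)) (D j) x) :
    ExcitedStep (deltaCells (n + 2 * k)) (complementCells D)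
      (complementCells (flipTuple D i x)) := by
  have hP' := tuplePoints_flipTuple_of_isValley hD hv
  obtain ⟨h1, h2, hl, hr⟩ := hv
  have hdy := (mem_strictTuples_iff.1 hD).1
  have hy := ((hdy i).aht_bounds h1.le h2.le).1
  have onPath : ∀ z, -((n + 2 * (i : ℕ) : ℕ) : ℤ) ≤ z → z ≤ ((n + 2 * (i : ℕ) : ℕ) : ℤ) →
      (z, aht (n + 2 * (i : ℕ)) (D i) z) ∈ tuplePoints D :=
    fun z hz1 hz2 => mem_tuplePoints.2 ⟨i, hz1, hz2, rfl⟩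
  obtain ⟨⟨a, b⟩, hab, hT⟩ := exists_cellPoint_eq_of_mem_tuplePoints
    (mem_strictTuples_iff.1 (flipTuple_mem_strictTuples_of_isValley hD ⟨h1, h2, hl, hr⟩ habove)).1
    (hP' ▸ mem_insert_self _ _)
  simp only [cellPoint_mk, Prod.mk.injEq] at hT
  have hlam : (a + 1, b + 1) ∈ deltaCells (n + 2 * k) := by
    rw [mem_deltaCells_iff] at hab ⊢; simp only; push_cast at hT; omega
  have hT' : cellPoint (n + 2 * k) (a + 1, b + 1) = (x, aht (n + 2 * (i : ℕ)) (D i) x) := by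
    simp only [cellPoint_mk, Prod.mk.injEq]; push_cast at hT ⊢; omega
  refine ⟨a, b, mem_complementCells.2 ⟨hab, ?_⟩, fun h => (mem_complementCells.1 h).2 ?_,
    fun h => (mem_complementCells.1 h).2 ?_, fun h => (mem_complementCells.1 h).2 ?_, hlam,
    complementCells_eq_of_tuplePoints_eq hlam (by simp) ?_⟩
  · rw [cellPoint_mk, hT.1, hT.2]
    exact aht_add_two_notMem_tuplePoints hD h1.le h2.le habove
  · convert onPath (x - 1) (by omega) (by omega) using 1
    simp only [cellPoint_mk, Prod.mk.injEq]; push_cast at hT ⊢; omega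
  · convert onPath (x + 1) (by omega) (by omega) using 1
    simp only [cellPoint_mk, Prod.mk.injEq]; push_cast at hT ⊢; omega
  · rw [hT']; exact onPath x h1.le h2.le
  · rw [hP', hT', cellPoint_mk, hT.1, hT.2]

/-- An excited move is only possible on top of a valley that can be raised. -/
lemma isValley_of_mem_tuplePoints (hD : D ∈ strictTuples n k) {i : Fin k} {x : ℤ}
    (h1 : -((n + 2 * (i : ℕ) : ℕ) : ℤ) ≤ x) (h2 : x ≤ ((n + 2 * (i : ℕ) : ℕ) : ℤ))
    (hfree : (x, aht (n + 2 * (i : ℕ)) (D i) x + 2) ∉ tuplePoints D)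
    (hside : ∀ z : ℤ, (z = x - 1 ∨ z = x + 1) →
      (z, aht (n + 2 * (i : ℕ)) (D i) x + 1) ∈ tuplePoints D) :
    IsValley _ (D i) x ∧ ∀ j : Fin k, (i : ℕ) + 1 = j →
      aht (n + 2 * (i : ℕ)) (D i) x + 2 < aht (n + 2 * (j : ℕ)) (D j) x := by
  set y := aht (n + 2 * (i : ℕ)) (D i) x
  have above : ∀ j : Fin k, (i : ℕ) < j → y + 4 ≤ aht (n + 2 * (j : ℕ)) (D j) x := by
    intro j hij
    have := aht_add_le_aht hD hij.le h1 h2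
    have := aht_sub_aht_emod_two D (i := i) (j := j) h1 h2 (by omega) (by omega)
    have : aht (n + 2 * (j : ℕ)) (D j) x ≠ y + 2 :=
      fun h => hfree (mem_tuplePoints.2 ⟨j, by omega, by omega, h.symm⟩)
    omega
  have side : ∀ z : ℤ, (z = x - 1 ∨ z = x + 1) →
      -((n + 2 * (i : ℕ) : ℕ) : ℤ) ≤ z ∧ z ≤ ((n + 2 * (i : ℕ) : ℕ) : ℤ) ∧
        aht (n + 2 * (i : ℕ)) (D i) z = y + 1 := by
    intro z hz
    obtain ⟨j, hj1, hj2, hj3⟩ := mem_tuplePoints.1 (hside z hz)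
    simp only at hj1 hj2 hj3
    rcases lt_trichotomy (j : ℕ) i with hij | hij | hij
    · have := aht_lt_aht hD hij hj1 hj2
      have := aht_sub_aht_le_one (D i) (u := x) (v := z) h1 (by omega) (by omega) (by omega)
      omega
    · rw [show j = i from Fin.ext hij] at hj1 hj2 hj3
      exact ⟨hj1, hj2, hj3.symm⟩
    · have := above j hij
      have := aht_sub_aht_le_one (D j) (u := x) (v := z) (by omega) hj1 (by omega) (by omega)
      omega
  obtain ⟨hl1, -, hl⟩ := side (x - 1) (Or.inl rfl)
  obtain ⟨-, hr2, hr⟩ := side (x + 1) (Or.inr rfl)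
  exact ⟨⟨by omega, by omega, hl, hr⟩, fun j hj => by have := above j (by omega); omega⟩

lemma exists_complementCells_eq_of_excitedStep (hD : D ∈ strictTuples n k)
    {E : Finset (ℕ × ℕ)} (h : ExcitedStep (deltaCells (n + 2 * k)) (complementCells D) E) :
    ∃ D' ∈ strictTuples n k, E = complementCells D' := by
  obtain ⟨a, b, hab, h10, h01, h11, hlam, rfl⟩ := h
  have onPaths : ∀ c ∈ deltaCells (n + 2 * k), c ∉ complementCells D →
      cellPoint (n + 2 * k) c ∈ tuplePoints D :=
    fun c hc hc' => by_contra fun h => hc' (mem_complementCells.2 ⟨hc, h⟩)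
  have hab' := mem_deltaCells_iff.1 (mem_complementCells.1 hab).1
  have hlam' := mem_deltaCells_iff.1 hlam
  simp only at hab' hlam'
  obtain ⟨i, hi1, hi2, hiy⟩ := mem_tuplePoints.1 (onPaths _ hlam h11)
  simp only [cellPoint_mk] at hi1 hi2 hiy
  rw [show ((b + 1 : ℕ) : ℤ) - ((a + 1 : ℕ) : ℤ) = (b : ℤ) - a by push_cast; ring] at hi1 hi2 hiy
  push_cast at hiy
  obtain ⟨hv, habove⟩ := isValley_of_mem_tuplePoints hD hi1 hi2
    (by
      convert (mem_complementCells.1 hab).2 using 2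
      simp only [cellPoint_mk, Prod.mk.injEq, true_and]; push_cast; omega)
    (by
      rintro z (rfl | rfl)
      · convert onPaths (a + 1, b) (mem_deltaCells_iff.2 ⟨by omega, by omega, by omega⟩) h10
          using 1
        simp only [cellPoint_mk, Prod.mk.injEq]; push_cast; omega
      · convert onPaths (a, b + 1) (mem_deltaCells_iff.2 ⟨by omega, by omega, by omega⟩) h01
          using 1
        simp only [cellPoint_mk, Prod.mk.injEq]; push_cast; omega)
  refine ⟨_, flipTuple_mem_strictTuples_of_isValley hD hv habove,
    (complementCells_eq_of_tuplePoints_eq hlam (by simp) ?_).symm⟩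
  rw [tuplePoints_flipTuple_of_isValley hD hv]
  congr 2 <;> simp only [cellPoint_mk, Prod.mk.injEq] <;> push_cast <;> omega

end Excited

section MinTuple

/-- `2i` up-steps, `n` peaks of height `2i + 1`, then `2i` down-steps. -/
def minPath (n i : ℕ) : Fin (2 * (n + 2 * i)) → Bool :=
  fun j => decide ((j : ℕ) < 2 * i) ||
    (decide ((j : ℕ) < 2 * i + 2 * n) && decide ((j : ℕ) % 2 = 0))

def minHeight (n i : ℕ) (x : ℤ) : ℤ :=
  if x ≤ -(n : ℤ) then x + n + 2 * i else if x ≤ n then 2 * i + (n + x) % 2 else n + 2 * i - x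

lemma aht_minPath {n i : ℕ} {x : ℤ} (h1 : -((n + 2 * i : ℕ) : ℤ) ≤ x)
    (h2 : x ≤ ((n + 2 * i : ℕ) : ℤ)) : aht (n + 2 * i) (minPath n i) x = minHeight n i x := by
  suffices h : ∀ t ≤ 2 * (n + 2 * i), pht (minPath n i) t = minHeight n i (t - (n + 2 * i)) by
    rw [aht, h _ (by omega)]; congr 1; omega
  intro t ht
  induction t with
  | zero => simp [pht_zero, minHeight]
  | succ t ih =>
    rw [pht_succ, ih (by omega)]
    have hs : stepVal (minPath n i) t =
        if t < 2 * i ∨ (t < 2 * i + 2 * n ∧ t % 2 = 0) then 1 else -1 := by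
      simp only [stepVal, dif_pos (show t < 2 * (n + 2 * i) by omega), minPath]
      by_cases h : t < 2 * i ∨ (t < 2 * i + 2 * n ∧ t % 2 = 0) <;> simp [h]
    rw [hs]
    unfold minHeight
    push_cast
    split_ifs <;> omega

lemma minHeight_nonneg {n i : ℕ} {x : ℤ} (h1 : -((n + 2 * i : ℕ) : ℤ) ≤ x)
    (h2 : x ≤ ((n + 2 * i : ℕ) : ℤ)) : 0 ≤ minHeight n i x := by
  unfold minHeight; push_cast at h1 h2; split_ifs <;> omega

lemma minHeight_add_one (n i : ℕ) (x : ℤ) : minHeight n (i + 1) x = minHeight n i x + 2 := by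
  unfold minHeight; push_cast; split_ifs <;> omega

lemma isDyck_minPath (n i : ℕ) : IsDyck (minPath n i) := by
  refine isDyck_iff_aht.2 ⟨fun x h1 h2 => ?_, ?_⟩
  · rw [aht_minPath h1 h2]; exact minHeight_nonneg h1 h2
  · rw [aht_minPath (by omega) le_rfl]; unfold minHeight; push_cast; split_ifs <;> omega

variable {n k : ℕ}

def minTuple (n k : ℕ) : DyckTuple n k := fun i => minPath n i

lemma minTuple_mem_strictTuples : minTuple n k ∈ strictTuples n k := by
  refine mem_strictTuples_iff.2 ⟨fun i => isDyck_minPath n i, fun i j hij x h1 h2 => ?_⟩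
  simp only [minTuple]
  rw [aht_minPath h1 h2, aht_minPath (by omega) (by omega), ← hij, minHeight_add_one]
  omega

lemma complementCells_minTuple : complementCells (minTuple n k) = deltaCells n := by
  ext ⟨a, b⟩
  simp only [mem_complementCells, mem_deltaCells_iff, mem_tuplePoints, cellPoint_mk, minTuple]
  constructor
  · rintro ⟨⟨ha, hb, hab⟩, hnot⟩
    refine ⟨ha, hb, not_lt.1 fun hlt => hnot ?_⟩
    let i : ℕ := if (b : ℤ) - a ≤ -(n : ℤ) then k - b
      else if (b : ℤ) - a ≤ n then (n + 2 * k - a - b) / 2 else k - a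
    have h1 : -((n + 2 * i : ℕ) : ℤ) ≤ (b : ℤ) - a := by simp only [i]; split_ifs <;> omega
    have h2 : (b : ℤ) - a ≤ ((n + 2 * i : ℕ) : ℤ) := by simp only [i]; split_ifs <;> omega
    refine ⟨⟨i, by simp only [i]; split_ifs <;> omega⟩, h1, h2, ?_⟩
    rw [aht_minPath h1 h2]
    unfold minHeight
    simp only [i]
    split_ifs <;> omega
  · rintro ⟨ha, hb, hab⟩
    refine ⟨⟨ha, hb, by omega⟩, ?_⟩
    rintro ⟨i, h1, h2, h3⟩
    rw [aht_minPath h1 h2] at h3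
    have := i.isLt
    unfold minHeight at h3
    split_ifs at h3 <;> omega

lemma minHeight_le_aht {D : DyckTuple n k} (hD : D ∈ strictTuples n k) (i : Fin k) {x : ℤ}
    (h1 : -((n + 2 * (i : ℕ) : ℕ) : ℤ) ≤ x) (h2 : x ≤ ((n + 2 * (i : ℕ) : ℕ) : ℤ)) :
    minHeight n i x ≤ aht (n + 2 * (i : ℕ)) (D i) x := by
  let j : Fin k := ⟨((max (-x) x - n + 1) / 2).toNat, by omega⟩
  have hj1 : -((n + 2 * (j : ℕ) : ℕ) : ℤ) ≤ x := by simp only [j]; omega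
  have hj2 : x ≤ ((n + 2 * (j : ℕ) : ℕ) : ℤ) := by simp only [j]; omega
  have := aht_add_le_aht hD (i := j) (j := i) (by simp only [j]; omega) hj1 hj2
  have := ((mem_strictTuples_iff.1 hD).1 j).aht_bounds hj1 hj2
  have := aht_add_emod_two (D i) h1 h2
  simp only [j] at *
  unfold minHeight
  split_ifs <;> omega

end MinTuple

section Correspondence

variable {n k : ℕ} {D : DyckTuple n k}

/-- The lowest path of `D` differing from `minPath` lies above it, and a highest point where it
is strictly above is a peak that can be lowered. -/
lemma exists_peak_of_ne_minTuple (hD : D ∈ strictTuples n k) (hne : D ≠ minTuple n k) :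
    ∃ (i : Fin k) (x : ℤ), -((n + 2 * (i : ℕ) : ℕ) : ℤ) < x ∧ x < ((n + 2 * (i : ℕ) : ℕ) : ℤ) ∧
      aht (n + 2 * (i : ℕ)) (D i) (x - 1) = aht (n + 2 * (i : ℕ)) (D i) x - 1 ∧
      aht (n + 2 * (i : ℕ)) (D i) (x + 1) = aht (n + 2 * (i : ℕ)) (D i) x - 1 ∧
      2 ≤ aht (n + 2 * (i : ℕ)) (D i) x ∧
      ∀ j : Fin k, (j : ℕ) + 1 = i → -((n + 2 * (j : ℕ) : ℕ) : ℤ) ≤ x →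
        x ≤ ((n + 2 * (j : ℕ) : ℕ) : ℤ) →
        aht (n + 2 * (j : ℕ)) (D j) x + 4 ≤ aht (n + 2 * (i : ℕ)) (D i) x := by
  obtain ⟨i, hi, hmin⟩ := (univ.filter fun i => D i ≠ minTuple n k i).exists_min_image
    (fun i : Fin k => (i : ℕ)) (by
      obtain ⟨i, hi⟩ := Function.ne_iff.1 hne
      exact ⟨i, mem_filter.2 ⟨mem_univ i, hi⟩⟩)
  simp only [mem_filter, mem_univ, true_and] at hi hmin
  have hdy := (mem_strictTuples_iff.1 hD).1
  obtain ⟨x₀, hx₀1, hx₀2, hx₀⟩ : ∃ x : ℤ, -((n + 2 * (i : ℕ) : ℕ) : ℤ) ≤ x ∧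
      x ≤ ((n + 2 * (i : ℕ) : ℕ) : ℤ) ∧
      aht (n + 2 * (i : ℕ)) (minPath n i) x < aht (n + 2 * (i : ℕ)) (D i) x := by
    by_contra! h
    refine hi (eq_of_aht_eq fun x h1 h2 => ?_)
    have := minHeight_le_aht hD i h1 h2
    have := h x h1 h2
    rw [aht_minPath h1 h2] at this
    show _ = aht _ (minPath n i) x
    rw [aht_minPath h1 h2]
    omega
  obtain ⟨x, hx1, hx2, hl, hr, hlt⟩ := exists_valley_of_lt
    (f := fun z => -aht (n + 2 * (i : ℕ)) (D i) z)
    (g := fun z => -aht (n + 2 * (i : ℕ)) (minPath n i) z)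
    (fun z h1 h2 => by have := aht_add_one_eq (D i) h1 h2; omega)
    (fun z h1 h2 => by have := aht_add_one_eq (minPath n i) h1 h2; omega)
    (by rw [aht_neg_self, aht_neg_self])
    (by rw [(hdy i).aht_self, (isDyck_minPath n i).aht_self])
    ⟨hx₀1, hx₀2⟩ (neg_lt_neg hx₀)
  have := aht_add_emod_two (D i) hx1.le hx2.le
  have := aht_add_emod_two (minPath n i) hx1.le hx2.le
  have := minHeight_nonneg hx1.le hx2.le
  rw [aht_minPath hx1.le hx2.le] at *
  refine ⟨i, x, hx1, hx2, by omega, by omega, by omega, fun j hj h1 h2 => ?_⟩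
  have hDj : D j = minPath n j := by_contra fun h => absurd (hmin j h) (by omega)
  have := minHeight_add_one n j x
  rw [hj] at this
  rw [hDj, aht_minPath h1 h2]
  omega

lemma exists_excitedStep_of_ne_minTuple (hD : D ∈ strictTuples n k) (hne : D ≠ minTuple n k) :
    ∃ D' ∈ strictTuples n k, area D' < area D ∧
      ExcitedStep (deltaCells (n + 2 * k)) (complementCells D') (complementCells D) := by
  obtain ⟨i, x, h1, h2, hl, hr, hy, hbelow⟩ := exists_peak_of_ne_minTuple hD hne
  have hc : aht (n + 2 * (i : ℕ)) (D i) (x - 1) = aht (n + 2 * (i : ℕ)) (D i) (x + 1) := by omega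
  have hD' := flipTuple_mem_strictTuples hD h1 h2 hc (by omega)
    (fun j hj hj1 hj2 => by have := hbelow j hj hj1 hj2; omega)
    (fun j hj => by have := aht_lt_aht hD (show (i : ℕ) < j by omega) h1.le h2.le; omega)
  have ht := aht_flipTuple h1 h2 hc i
  simp only [true_and] at ht
  have hv : IsValley _ (flipTuple D i x i) x := by
    refine ⟨h1, h2, ?_, ?_⟩ <;> rw [ht, ht, if_neg (by omega), if_pos rfl] <;> omega
  have habove : ∀ j : Fin k, (i : ℕ) + 1 = j → aht (n + 2 * (i : ℕ)) (flipTuple D i x i) x + 2 <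
      aht (n + 2 * (j : ℕ)) (flipTuple D i x j) x := by
    intro j hj
    have := aht_lt_aht hD (show (i : ℕ) < j by omega) h1.le h2.le
    rw [ht, aht_flipTuple h1 h2 hc, if_pos rfl, if_neg (by rintro ⟨rfl, -⟩; omega)]
    omega
  refine ⟨_, hD', by rw [area_flipTuple h1 h2 hc]; omega, ?_⟩
  simpa only [flipTuple_flipTuple] using excitedStep_complementCells_flipTuple hD' hv habove

theorem isExcited_complementCells (hD : D ∈ strictTuples n k) :
    IsExcited (deltaCells (n + 2 * k)) (deltaCells n) (complementCells D) := by
  induction hN : (area D).toNat using Nat.strong_induction_on generalizing D with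
  | _ N ih =>
    by_cases hmin : D = minTuple n k
    · rw [hmin, complementCells_minTuple]
      exact Relation.ReflTransGen.refl
    · obtain ⟨D', hD', harea, hstep⟩ := exists_excitedStep_of_ne_minTuple hD hmin
      have := area_nonneg hD'
      exact (ih _ (by omega) hD' rfl).tail hstep

theorem exists_complementCells_eq_of_isExcited {E : Finset (ℕ × ℕ)}
    (hE : IsExcited (deltaCells (n + 2 * k)) (deltaCells n) E) :
    ∃ D ∈ strictTuples n k, E = complementCells D := by
  induction hE with
  | refl => exact ⟨minTuple n k, minTuple_mem_strictTuples, complementCells_minTuple.symm⟩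
  | tail _ hstep ih =>
    obtain ⟨D, hD, rfl⟩ := ih
    exact exists_complementCells_eq_of_excitedStep hD hstep

end Correspondence

section Bijection

variable {n k : ℕ}

/-- `⋃ᵢ (Dᵢ ∖ V(Dᵢ))`. -/
def tupleNonValleyPoints (D : DyckTuple n k) : Finset (ℤ × ℤ) :=
  univ.biUnion fun i : Fin k => nonValleyPoints (n + 2 * (i : ℕ)) (D i)

lemma tupleNonValleyPoints_subset (D : DyckTuple n k) : tupleNonValleyPoints D ⊆ tuplePoints D :=
  biUnion_mono fun _ _ _ hp => (mem_nonValleyPoints_iff.1 hp).1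

variable {D : DyckTuple n k}

lemma notMem_of_isValley (hD : D ∈ strictTuples n k) {C : Finset (ℤ × ℤ)}
    (hC : C ⊆ tupleNonValleyPoints D) {i : Fin k} {x : ℤ} (hv : IsValley _ (D i) x) :
    (x, aht (n + 2 * (i : ℕ)) (D i) x) ∉ C := by
  intro h
  obtain ⟨j, -, hj⟩ := mem_biUnion.1 (hC h)
  obtain ⟨hpath, hnv⟩ := mem_nonValleyPoints_iff.1 hj
  obtain ⟨h1, h2, h3⟩ := mem_pathPoints_iff.1 hpath
  obtain rfl := index_eq_of_aht_eq hD h1 h2 hv.1.le hv.2.1.le h3.symm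
  exact hnv hv

lemma aht_le_of_isValley_mem {D' : DyckTuple n k} (hD : D ∈ strictTuples n k)
    (hD' : D' ∈ strictTuples n k) {i : Fin k} (hlow : ∀ j : Fin k, (j : ℕ) < i → D j = D' j)
    (hval : ∀ x, IsValley _ (D i) x → (x, aht (n + 2 * (i : ℕ)) (D i) x) ∈ tuplePoints D')
    {x : ℤ} (h1 : -((n + 2 * (i : ℕ) : ℕ) : ℤ) ≤ x) (h2 : x ≤ ((n + 2 * (i : ℕ) : ℕ) : ℤ)) :
    aht (n + 2 * (i : ℕ)) (D' i) x ≤ aht (n + 2 * (i : ℕ)) (D i) x := by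
  by_contra! hlt
  obtain ⟨w, hw1, hw2, hl, hr, hw⟩ := exists_valley_of_lt
    (fun z h1 h2 => aht_add_one_eq (D i) h1 h2) (fun z h1 h2 => aht_add_one_eq (D' i) h1 h2)
    (by rw [aht_neg_self, aht_neg_self])
    (by rw [((mem_strictTuples_iff.1 hD).1 i).aht_self,
      ((mem_strictTuples_iff.1 hD').1 i).aht_self])
    ⟨h1, h2⟩ hlt
  obtain ⟨j, hj1, hj2, hj3⟩ := mem_tuplePoints.1 (hval w ⟨hw1, hw2, hl, hr⟩)
  simp only at hj1 hj2 hj3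
  rcases lt_trichotomy (j : ℕ) i with hij | hij | hij
  · rw [← hlow j hij] at hj3
    have := aht_lt_aht hD hij hj1 hj2
    omega
  · rw [show j = i from Fin.ext hij] at hj3
    omega
  · have := aht_lt_aht hD' hij hw1.le hw2.le
    omega

lemma eq_of_isValley_mem {D' : DyckTuple n k} (hD : D ∈ strictTuples n k)
    (hD' : D' ∈ strictTuples n k)
    (h : ∀ i x, IsValley _ (D i) x → (x, aht (n + 2 * (i : ℕ)) (D i) x) ∈ tuplePoints D')
    (h' : ∀ i x, IsValley _ (D' i) x → (x, aht (n + 2 * (i : ℕ)) (D' i) x) ∈ tuplePoints D) :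
    D = D' := by
  by_contra hne
  obtain ⟨i, hi, hmin⟩ := (univ.filter fun i => D i ≠ D' i).exists_min_image
    (fun i : Fin k => (i : ℕ)) (by
      obtain ⟨i, hi⟩ := Function.ne_iff.1 hne
      exact ⟨i, mem_filter.2 ⟨mem_univ i, hi⟩⟩)
  simp only [mem_filter, mem_univ, true_and] at hi hmin
  have hlow : ∀ j : Fin k, (j : ℕ) < i → D j = D' j :=
    fun j hj => by_contra fun h => absurd (hmin j h) (by omega)
  exact hi (eq_of_aht_eq fun x h1 h2 => le_antisymm
    (aht_le_of_isValley_mem hD' hD (fun j hj => (hlow j hj).symm) (h' i) h1 h2)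
    (aht_le_of_isValley_mem hD hD' hlow (h i) h1 h2))

lemma isValley_of_aht_eq_add_two (hD : D ∈ strictTuples n k) {i j : Fin k}
    (hij : (i : ℕ) + 1 = j) {x : ℤ} (hv : IsValley _ (D i) x)
    (hyj : aht (n + 2 * (j : ℕ)) (D j) x = aht (n + 2 * (i : ℕ)) (D i) x + 2) :
    IsValley _ (D j) x := by
  obtain ⟨h1, h2, hl, hr⟩ := hv
  have := aht_lt_aht hD (i := i) (j := j) (by omega) (x := x - 1) (by omega) (by omega)
  have := aht_lt_aht hD (i := i) (j := j) (by omega) (x := x + 1) (by omega) (by omega)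
  have := aht_sub_aht_emod_two D (i := i) (j := j) (x := x - 1) (by omega) (by omega)
    (by omega) (by omega)
  have := aht_sub_aht_emod_two D (i := i) (j := j) (x := x + 1) (by omega) (by omega)
    (by omega) (by omega)
  have := aht_sub_aht_le_one (D j) (u := x) (v := x - 1) (by omega) (by omega) (by omega)
    (by omega)
  have := aht_sub_aht_le_one (D j) (u := x) (v := x + 1) (by omega) (by omega) (by omega)
    (by omega)
  exact ⟨by omega, by omega, by omega, by omega⟩

/-- When the path above blocks the flip, the stack of valleys above is raised first; either way
exactly one point of `D` moves. -/
theorem exists_raise (hD : D ∈ strictTuples n k) {i : Fin k} {x : ℤ} (hv : IsValley _ (D i) x) :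
    ∃ D' ∈ strictTuples n k, ∃ y : ℤ, (x, y) ∉ tuplePoints D ∧
      tuplePoints D' = insert (x, y) ((tuplePoints D).erase (x, aht (n + 2 * (i : ℕ)) (D i) x)) ∧
      area D < area D' ∧ ∀ j : Fin k, (j : ℕ) < i → D' j = D j := by
  obtain ⟨h1, h2, hl, hr⟩ := hv
  by_cases hfree : ∀ j : Fin k, (i : ℕ) + 1 = j →
      aht (n + 2 * (i : ℕ)) (D i) x + 2 < aht (n + 2 * (j : ℕ)) (D j) x
  · refine ⟨flipTuple D i x, flipTuple_mem_strictTuples_of_isValley hD ⟨h1, h2, hl, hr⟩ hfree,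
      _, aht_add_two_notMem_tuplePoints hD h1.le h2.le hfree,
      tuplePoints_flipTuple_of_isValley hD ⟨h1, h2, hl, hr⟩,
      by rw [area_flipTuple h1 h2 (by omega)]; omega,
      fun j hj => flipTuple_of_ne D x (by rintro rfl; omega)⟩
  push Not at hfree
  obtain ⟨j, hij, hle⟩ := hfree
  have hyj : aht (n + 2 * (j : ℕ)) (D j) x = aht (n + 2 * (i : ℕ)) (D i) x + 2 := by
    have := aht_add_le_aht hD (i := i) (j := j) (by omega) h1.le h2.le
    omega
  have hvj := isValley_of_aht_eq_add_two hD hij ⟨h1, h2, hl, hr⟩ hyj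
  obtain ⟨D₁, hD₁, y, hy, hP₁, harea, hlow⟩ := exists_raise hD hvj
  have hi₁ : D₁ i = D i := hlow i (by omega)
  have hv₁ : IsValley _ (D₁ i) x := hi₁ ▸ ⟨h1, h2, hl, hr⟩
  have hjP : (x, aht (n + 2 * (i : ℕ)) (D i) x + 2) ∈ tuplePoints D :=
    hyj ▸ mem_tuplePoints.2 ⟨j, by omega, by omega, rfl⟩
  have hiP : (x, aht (n + 2 * (i : ℕ)) (D i) x) ∈ tuplePoints D :=
    mem_tuplePoints.2 ⟨i, h1.le, h2.le, rfl⟩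
  rw [hyj] at hP₁
  have habove : ∀ j' : Fin k, (i : ℕ) + 1 = j' →
      aht (n + 2 * (i : ℕ)) (D₁ i) x + 2 < aht (n + 2 * (j' : ℕ)) (D₁ j') x := by
    intro j' hj'
    obtain rfl : j' = j := Fin.ext (by omega)
    have := aht_add_le_aht hD₁ (i := i) (j := j') (by omega) h1.le h2.le
    have hne : aht (n + 2 * (j' : ℕ)) (D₁ j') x ≠ aht (n + 2 * (i : ℕ)) (D i) x + 2 := fun h => by
      have hmem : (x, aht (n + 2 * (i : ℕ)) (D i) x + 2) ∈ tuplePoints D₁ :=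
        mem_tuplePoints.2 ⟨j', by omega, by omega, h.symm⟩
      rw [hP₁, mem_insert, mem_erase] at hmem
      rcases hmem with hmem | ⟨hmem, -⟩
      · exact hy (hmem ▸ hjP)
      · exact hmem rfl
    rw [hi₁] at this ⊢
    omega
  have hc : aht (n + 2 * (i : ℕ)) (D₁ i) (x - 1) = aht (n + 2 * (i : ℕ)) (D₁ i) (x + 1) := by
    rw [hi₁]; omega
  refine ⟨flipTuple D₁ i x, flipTuple_mem_strictTuples_of_isValley hD₁ hv₁ habove, y, hy, ?_,
    by rw [area_flipTuple h1 h2 hc, hi₁]; omega,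
    fun j' hj' => by rw [flipTuple_of_ne D₁ x (by rintro rfl; omega), hlow j' (by omega)]⟩
  rw [tuplePoints_flipTuple_of_isValley hD₁ hv₁, hP₁, hi₁]
  exact insert_erase_insert_erase hjP (by simp) fun h => hy (h ▸ hiP)
termination_by k - (i : ℕ)

/-- An area-maximal strict tuple whose paths cover `S` has all its valley points in `S`. -/
lemma exists_isValley_mem_of_subset (hD : D ∈ strictTuples n k) {S : Finset (ℤ × ℤ)}
    (hS : S ⊆ tuplePoints D) :
    ∃ D' ∈ strictTuples n k, S ⊆ tuplePoints D' ∧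
      ∀ i x, IsValley _ (D' i) x → (x, aht (n + 2 * (i : ℕ)) (D' i) x) ∈ S := by
  obtain ⟨D', hD', hmax⟩ := exists_max_image ((strictTuples n k).filter (S ⊆ tuplePoints ·))
    area ⟨D, mem_filter.2 ⟨hD, hS⟩⟩
  rw [mem_filter] at hD'
  refine ⟨D', hD'.1, hD'.2, fun i x hv => by_contra fun hnot => ?_⟩
  obtain ⟨D'', hD'', y, -, hP, harea, -⟩ := exists_raise hD'.1 hv
  have hS'' : S ⊆ tuplePoints D'' := fun p hp =>
    hP ▸ mem_insert_of_mem (mem_erase.2 ⟨fun h => hnot (h ▸ hp), hD'.2 hp⟩)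
  exact (hmax D'' (mem_filter.2 ⟨hD'', hS''⟩)).not_gt harea

lemma exists_isPleasant_image_eq (hD : D ∈ strictTuples n k) (C : Finset (ℤ × ℤ)) :
    ∃ P, IsPleasant (deltaCells (n + 2 * k)) (deltaCells n) P ∧
      tuplePoints D \ C = P.image (cellPoint (n + 2 * k)) := by
  refine ⟨(deltaCells (n + 2 * k)).filter fun c => cellPoint (n + 2 * k) c ∈ tuplePoints D \ C,
    ⟨complementCells D, isExcited_complementCells hD, fun c hc => ?_⟩, ?_⟩
  · rw [mem_filter] at hc
    exact mem_sdiff.2 ⟨hc.1, fun h => (mem_complementCells.1 h).2 (mem_sdiff.1 hc.2).1⟩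
  · ext p
    simp only [mem_image, mem_filter]
    refine ⟨fun hp => ?_, fun ⟨c, ⟨_, hc⟩, hcp⟩ => hcp ▸ hc⟩
    obtain ⟨c, hc, rfl⟩ := exists_cellPoint_eq_of_mem_tuplePoints
      (mem_strictTuples_iff.1 hD).1 (mem_sdiff.1 hp).1
    exact ⟨c, ⟨hc, hp⟩, rfl⟩

lemma eq_and_eq_of_sdiff_eq {D' : DyckTuple n k} {C C' : Finset (ℤ × ℤ)}
    (hD : D ∈ strictTuples n k) (hD' : D' ∈ strictTuples n k) (hC : C ⊆ tupleNonValleyPoints D)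
    (hC' : C' ⊆ tupleNonValleyPoints D') (h : tuplePoints D \ C = tuplePoints D' \ C') :
    D = D' ∧ C = C' := by
  have valley_mem : ∀ {D D' : DyckTuple n k} {C C' : Finset (ℤ × ℤ)}, D ∈ strictTuples n k →
      C ⊆ tupleNonValleyPoints D → tuplePoints D \ C = tuplePoints D' \ C' →
      ∀ i x, IsValley _ (D i) x → (x, aht (n + 2 * (i : ℕ)) (D i) x) ∈ tuplePoints D' :=
    fun hD hC h i x hv => (mem_sdiff.1 (h ▸ mem_sdiff.2
      ⟨mem_tuplePoints.2 ⟨i, hv.1.le, hv.2.1.le, rfl⟩, notMem_of_isValley hD hC hv⟩)).1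
  obtain rfl := eq_of_isValley_mem hD hD' (valley_mem hD hC h) (valley_mem hD' hC' h.symm)
  refine ⟨rfl, ?_⟩
  rw [← Finset.sdiff_sdiff_eq_self (hC.trans (tupleNonValleyPoints_subset D)), h,
    Finset.sdiff_sdiff_eq_self (hC'.trans (tupleNonValleyPoints_subset D))]

lemma exists_sdiff_eq_of_isPleasant {P : Finset (ℕ × ℕ)}
    (hP : IsPleasant (deltaCells (n + 2 * k)) (deltaCells n) P) :
    ∃ D ∈ strictTuples n k, ∃ C ⊆ tupleNonValleyPoints D,
      tuplePoints D \ C = P.image (cellPoint (n + 2 * k)) := by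
  obtain ⟨E, hE, hPE⟩ := hP
  obtain ⟨D₀, hD₀, rfl⟩ := exists_complementCells_eq_of_isExcited hE
  have hS : P.image (cellPoint (n + 2 * k)) ⊆ tuplePoints D₀ := by
    intro p hp
    obtain ⟨c, hc, rfl⟩ := mem_image.1 hp
    obtain ⟨hcl, hcE⟩ := mem_sdiff.1 (hPE hc)
    exact by_contra fun h => hcE (mem_complementCells.2 ⟨hcl, h⟩)
  obtain ⟨D, hD, hSD, hval⟩ := exists_isValley_mem_of_subset hD₀ hS
  refine ⟨D, hD, tuplePoints D \ P.image (cellPoint (n + 2 * k)), fun p hp => ?_,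
    Finset.sdiff_sdiff_eq_self hSD⟩
  obtain ⟨hpD, hpS⟩ := mem_sdiff.1 hp
  obtain ⟨i, h1, h2, h3⟩ := mem_tuplePoints.1 hpD
  refine mem_biUnion.2 ⟨i, mem_univ i, mem_nonValleyPoints_iff.2
    ⟨mem_pathPoints_iff.2 ⟨h1, h2, h3⟩, fun hv => hpS ?_⟩⟩
  rw [show p = (p.1, aht (n + 2 * (i : ℕ)) (D i) p.1) from Prod.ext rfl h3]
  exact hval i p.1 hv

end Bijection

theorem statement_9_general (n k : ℕ) :
    Set.BijOn
      (fun DC : DyckTuple n k × Finset (ℤ × ℤ) =>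
        (Finset.univ.biUnion fun i : Fin k => pathPoints (n + 2 * (i : ℕ)) (DC.1 i)) \ DC.2)
      {DC : DyckTuple n k × Finset (ℤ × ℤ) |
        DC.1 ∈ strictTuples n k ∧
          DC.2 ⊆ Finset.univ.biUnion fun i : Fin k =>
            nonValleyPoints (n + 2 * (i : ℕ)) (DC.1 i)}
      {Q : Finset (ℤ × ℤ) |
        ∃ P : Finset (ℕ × ℕ),
          IsPleasant (deltaCells (n + 2 * k)) (deltaCells n) P ∧
            Q = P.image fun c =>
              ((c.2 : ℤ) - (c.1 : ℤ), (n : ℤ) + 2 * (k : ℤ) - (c.1 : ℤ) - (c.2 : ℤ))} := by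
  have hT : (fun c : ℕ × ℕ =>
      ((c.2 : ℤ) - (c.1 : ℤ), (n : ℤ) + 2 * (k : ℤ) - (c.1 : ℤ) - (c.2 : ℤ))) =
      cellPoint (n + 2 * k) := by
    funext c; simp [cellPoint]
  rw [hT]
  refine ⟨fun DC hDC => exists_isPleasant_image_eq hDC.1 DC.2,
    fun DC hDC DC' hDC' h => ?_, fun Q ⟨P, hP, hQ⟩ => ?_⟩
  · obtain ⟨hD, hC⟩ := eq_and_eq_of_sdiff_eq hDC.1 hDC'.1 hDC.2 hDC'.2 h
    exact Prod.ext hD hC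
  · obtain ⟨D, hD, C, hC, h⟩ := exists_sdiff_eq_of_isPleasant hP
    exact ⟨(D, C), ⟨hD, hC⟩, h.trans hQ.symm⟩

theorem statement_9 (n k : ℕ) (hn : 0 < n) (hk : 0 < k) :
    Set.BijOn
      (fun DC : DyckTuple n k × Finset (ℤ × ℤ) =>
        (Finset.univ.biUnion fun i : Fin k => pathPoints (n + 2 * (i : ℕ)) (DC.1 i)) \ DC.2)
      {DC : DyckTuple n k × Finset (ℤ × ℤ) |
        DC.1 ∈ strictTuples n k ∧
          DC.2 ⊆ Finset.univ.biUnion fun i : Fin k =>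
            nonValleyPoints (n + 2 * (i : ℕ)) (DC.1 i)}
      {Q : Finset (ℤ × ℤ) |
        ∃ P : Finset (ℕ × ℕ),
          IsPleasant (deltaCells (n + 2 * k)) (deltaCells n) P ∧
            Q = P.image fun c =>
              ((c.2 : ℤ) - (c.1 : ℤ), (n : ℤ) + 2 * (k : ℤ) - (c.1 : ℤ) - (c.2 : ℤ))} :=
  statement_9_general n k

end Paper
end
end
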